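/- arXiv:2601.08098 — 9 statements merged into one kernel-verified Lean document; each statement's English description precedes it below -/
import Mathlib

section
/- Let n ≥ 3 be an integer, let f : ℝ → ℝ be continuously differentiable, and let F(u) = ∫₀ᵘ f(t) dt. Let u ∈ C²([0,1]) satisfy u''(r) + ((n-1)/r) u'(r) + f(u(r)) = 0 for 0 < r < 1, with u'(0) = u(1) = 0, and let ψ ∈ C²([0,1]). Then ∫₀¹ [ 2 (ψ(r) r^{n-1})' F(u(r)) + ( 2 ψ'(r) r^{n-1} − (ψ(r) r^{n-1})' ) u(r) f(u(r)) − u(r) u'(r) L[ψ](r) r^{n-3} ] dr = ψ(1) (u'(1))², where L[ψ](r) = r² ψ''(r) − (n−1) r ψ'(r) + (n−1) ψ(r). -/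
open Set Real

/-- Generalized radial Pohozhaev identity (Theorem 1.1 for the Laplacian).
`u` is C² on `[0,1]` (with derivative `u'` and second derivative `u''`,
the latter continuous on `[0,1]`), solves `u'' + ((n-1)/r) u' + f(u) = 0`
on `(0,1)` with `u'(0) = u(1) = 0`, and `ψ` is C² on `[0,1]`.  Here the
derivative `(ψ r^{n-1})' = ψ' r^{n-1} + (n-1) ψ r^{n-2}` has been expanded,
and `L[ψ] = r²ψ'' - (n-1) r ψ' + (n-1) ψ`. -/
theorem generalized_pohozhaev_radial
    (n : ℕ) (hn : 3 ≤ n)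
    (f : ℝ → ℝ) (hf : ContDiff ℝ 1 f)
    (F : ℝ → ℝ) (hF : ∀ x : ℝ, F x = ∫ t in (0:ℝ)..x, f t)
    (u u' u'' : ℝ → ℝ)
    (hu : ∀ r ∈ Icc (0:ℝ) 1, HasDerivAt u (u' r) r)
    (hu' : ∀ r ∈ Icc (0:ℝ) 1, HasDerivAt u' (u'' r) r)
    (hu''c : ContinuousOn u'' (Icc (0:ℝ) 1))
    (ψ ψ' ψ'' : ℝ → ℝ)
    (hψ : ∀ r ∈ Icc (0:ℝ) 1, HasDerivAt ψ (ψ' r) r)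
    (hψ' : ∀ r ∈ Icc (0:ℝ) 1, HasDerivAt ψ' (ψ'' r) r)
    (hψ''c : ContinuousOn ψ'' (Icc (0:ℝ) 1))
    (hode : ∀ r ∈ Ioo (0:ℝ) 1, u'' r + ((n : ℝ) - 1) / r * u' r + f (u r) = 0)
    (hbc0 : u' 0 = 0) (hbc1 : u 1 = 0) :
    ∫ r in (0:ℝ)..1,
        (2 * (ψ' r * r ^ (n - 1) + ((n : ℝ) - 1) * ψ r * r ^ (n - 2)) * F (u r)
          + (2 * ψ' r * r ^ (n - 1)
              - (ψ' r * r ^ (n - 1) + ((n : ℝ) - 1) * ψ r * r ^ (n - 2)))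
            * (u r * f (u r))
          - u r * u' r
            * (r ^ 2 * ψ'' r - ((n : ℝ) - 1) * r * ψ' r + ((n : ℝ) - 1) * ψ r)
            * r ^ (n - 3))
      = ψ 1 * (u' 1) ^ 2 := by
  obtain ⟨m, rfl⟩ : ∃ m, n = m + 3 := ⟨n - 3, by omega⟩
  have hm1 : m + 3 - 1 = m + 2 := by omega
  have hm2 : m + 3 - 2 = m + 1 := by omega
  have hm3 : m + 3 - 3 = m := by omega
  have hfc : Continuous f := hf.continuous
  have hFd : ∀ x : ℝ, HasDerivAt F (f x) x := by
    intro x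
    have : HasDerivAt (fun y => ∫ t in (0:ℝ)..y, f t) (f x) x :=
      (hfc.integral_hasStrictDerivAt 0 x).hasDerivAt
    exact this.congr_of_eventuallyEq (by filter_upwards with y using (hF y))
  have hF0 : F 0 = 0 := by rw [hF]; simp
  -- the Pohozaev function
  set c : ℝ := (m : ℝ) + 2 with hc
  set P : ℝ → ℝ := fun r =>
    ψ r * r ^ (m + 2) * (u' r) ^ 2
      + (c * ψ r * r ^ (m + 1) - ψ' r * r ^ (m + 2)) * (u r * u' r)
      + 2 * (ψ r * r ^ (m + 2) * F (u r)) with hP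
  set I : ℝ → ℝ := fun r =>
    2 * (ψ' r * r ^ (m + 2) + ((m + 3 : ℕ) - 1 : ℝ) * ψ r * r ^ (m + 1)) * F (u r)
      + (2 * ψ' r * r ^ (m + 2)
          - (ψ' r * r ^ (m + 2) + ((m + 3 : ℕ) - 1 : ℝ) * ψ r * r ^ (m + 1)))
        * (u r * f (u r))
      - u r * u' r
        * (r ^ 2 * ψ'' r - ((m + 3 : ℕ) - 1 : ℝ) * r * ψ' r + ((m + 3 : ℕ) - 1 : ℝ) * ψ r)
        * r ^ m with hI
  have key : ∀ x ∈ Ioo (0:ℝ) 1, HasDerivAt P (I x) x := by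
    intro x hx
    have hx' : x ∈ Icc (0:ℝ) 1 := Ioo_subset_Icc_self hx
    have hx0 : x ≠ 0 := ne_of_gt hx.1
    have hu₁ := hu x hx'
    have hu'₁ := hu' x hx'
    have hψ₁ := hψ x hx'
    have hψ'₁ := hψ' x hx'
    have hFu : HasDerivAt (fun r => F (u r)) (f (u x) * u' x) x :=
      (hFd (u x)).comp x hu₁
    have hp2 : HasDerivAt (fun r : ℝ => r ^ (m + 2)) ((m + 2 : ℕ) * x ^ (m + 1)) x := by
      simpa using hasDerivAt_pow (m + 2) x
    have hp1 : HasDerivAt (fun r : ℝ => r ^ (m + 1)) ((m + 1 : ℕ) * x ^ m) x := by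
      simpa using hasDerivAt_pow (m + 1) x
    have h1 : HasDerivAt (fun r => ψ r * r ^ (m + 2) * (u' r) ^ 2)
        ((ψ' x * x ^ (m + 2) + ψ x * ((m + 2 : ℕ) * x ^ (m + 1))) * (u' x) ^ 2
          + ψ x * x ^ (m + 2) * (2 * u' x ^ 1 * u'' x)) x :=
      (hψ₁.mul hp2).mul (hu'₁.pow 2)
    have h2 : HasDerivAt (fun r => (c * ψ r * r ^ (m + 1) - ψ' r * r ^ (m + 2)) * (u r * u' r))
        ((c * ψ' x * x ^ (m + 1) + c * ψ x * ((m + 1 : ℕ) * x ^ m)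
            - (ψ'' x * x ^ (m + 2) + ψ' x * ((m + 2 : ℕ) * x ^ (m + 1))))
          * (u x * u' x)
          + (c * ψ x * x ^ (m + 1) - ψ' x * x ^ (m + 2)) * (u' x * u' x + u x * u'' x)) x :=
      ((((hψ₁.const_mul c).mul hp1).sub (hψ'₁.mul hp2)).mul (hu₁.mul hu'₁))
    have h3 : HasDerivAt (fun r => 2 * (ψ r * r ^ (m + 2) * F (u r)))
        (2 * ((ψ' x * x ^ (m + 2) + ψ x * ((m + 2 : ℕ) * x ^ (m + 1))) * F (u x)
          + ψ x * x ^ (m + 2) * (f (u x) * u' x))) x :=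
      ((hψ₁.mul hp2).mul hFu).const_mul 2
    have hD := (h1.add h2).add h3
    have hode' : u'' x = -(((m + 3 : ℕ) : ℝ) - 1) / x * u' x - f (u x) := by
      have h := hode x hx
      field_simp at h ⊢
      linarith
    have : I x =
        (ψ' x * x ^ (m + 2) + ψ x * ((m + 2 : ℕ) * x ^ (m + 1))) * (u' x) ^ 2
          + ψ x * x ^ (m + 2) * (2 * u' x ^ 1 * u'' x)
          + ((c * ψ' x * x ^ (m + 1) + c * ψ x * ((m + 1 : ℕ) * x ^ m)
              - (ψ'' x * x ^ (m + 2) + ψ' x * ((m + 2 : ℕ) * x ^ (m + 1))))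
            * (u x * u' x)
            + (c * ψ x * x ^ (m + 1) - ψ' x * x ^ (m + 2)) * (u' x * u' x + u x * u'' x))
          + 2 * ((ψ' x * x ^ (m + 2) + ψ x * ((m + 2 : ℕ) * x ^ (m + 1))) * F (u x)
            + ψ x * x ^ (m + 2) * (f (u x) * u' x)) := by
      rw [hI, hode', hc]
      push_cast
      field_simp
      ring
    rw [hP]
    rw [this]
    exact hD
  -- continuity of everything on [0,1]
  have hcu : ContinuousOn u (Icc (0:ℝ) 1) := fun r hr =>
    (hu r hr).continuousAt.continuousWithinAt
  have hcu' : ContinuousOn u' (Icc (0:ℝ) 1) := fun r hr =>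
    (hu' r hr).continuousAt.continuousWithinAt
  have hcψ : ContinuousOn ψ (Icc (0:ℝ) 1) := fun r hr =>
    (hψ r hr).continuousAt.continuousWithinAt
  have hcψ' : ContinuousOn ψ' (Icc (0:ℝ) 1) := fun r hr =>
    (hψ' r hr).continuousAt.continuousWithinAt
  have hcF : Continuous F := by
    have : Differentiable ℝ F := fun x => (hFd x).differentiableAt
    exact this.continuous
  have hPc : ContinuousOn P (Icc (0:ℝ) 1) := by
    rw [hP]
    fun_prop
  have hIc : ContinuousOn I (Icc (0:ℝ) 1) := by
    rw [hI]
    fun_prop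
  have hIint : IntervalIntegrable I MeasureTheory.volume 0 1 := by
    apply ContinuousOn.intervalIntegrable
    rwa [uIcc_of_le (by norm_num : (0:ℝ) ≤ 1)]
  have hFTC := intervalIntegral.integral_eq_sub_of_hasDerivAt_of_le (by norm_num : (0:ℝ) ≤ 1)
    hPc key hIint
  have hP1 : P 1 = ψ 1 * (u' 1) ^ 2 := by
    rw [hP]
    simp [hbc1, hF0]
  have hP0 : P 0 = 0 := by
    rw [hP]
    norm_num
  have hgoal : (∫ r in (0:ℝ)..1, I r) = ψ 1 * (u' 1) ^ 2 := by
    rw [hFTC, hP1, hP0, sub_zero]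
  rw [hI] at hgoal
  simp only [hm1, hm2, hm3] at hgoal ⊢
  exact hgoal
end

section
/- Let p ≥ 2 and n ≥ 3 be given (p real, n an integer), let φ(t) = t|t|^{p-2}, let f : ℝ → ℝ be continuously differentiable, and let F(u) = ∫₀ᵘ f(t) dt. Let u ∈ C²([0,1]) satisfy (φ(u'(r)))' + ((n-1)/r) φ(u'(r)) + f(u(r)) = 0 for 0 < r < 1, with u'(0) = u(1) = 0, and let ψ ∈ C²([0,1]). Then ∫₀¹ [ ( p F(u(r)) − u(r) f(u(r)) ) (ψ(r) r^{n-1})' + p ψ'(r) u(r) f(u(r)) r^{n-1} − φ(u'(r)) u(r) L_p[ψ](r) r^{n-3} ] dr = (p−1) φ(u'(1)) ψ(1) u'(1), where L_p[ψ](r) = (p−1) r² ψ''(r) − (n−1) r ψ'(r) + (n−1) ψ(r). -/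
open Set Real

/-!
Along a solution, the integrand is the exact derivative of
`H = ψ r^(n-1) (p F(u) + (p-1) u' φ(u')) + u φ(u') ((n-1) ψ r^(n-2) - (p-1) ψ' r^(n-1))`.
Differentiating `H` uses the equation only in the form `r (φ(u'))' + (n-1) φ(u') + r f(u) = 0`,
and `φ` only through Euler's identity `t φ'(t) = (p-1) φ(t)` for a `(p-1)`-homogeneous function.
The integral is therefore `H(1) - H(0)`, where `H(0) = 0` since `n ≥ 3` and `u(1) = 0` leaves
`H(1) = (p-1) φ(u'(1)) ψ(1) u'(1)`.
-/

theorem hasDerivAt_mul_abs_rpow {q : ℝ} (hq : 0 ≤ q) (t : ℝ) :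
    HasDerivAt (fun s : ℝ => s * |s| ^ q) ((q + 1) * |t| ^ q) t := by
  have hcont : Continuous fun s : ℝ => |s| ^ q := (continuous_rpow_const hq).comp continuous_abs
  refine hasDerivAt_of_hasDerivAt_of_ne' (x := 0) (fun s hs => ?_)
    (continuous_id.mul hcont).continuousAt (continuous_const.mul hcont).continuousAt t
  have habs : |s| ≠ 0 := abs_ne_zero.mpr hs
  refine ((hasDerivAt_id' s).fun_mul
    ((hasDerivAt_abs hs).rpow_const (p := q) (.inl habs))).congr_deriv ?_
  rw [Real.rpow_sub_one habs, Pi.mul_apply]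
  field_simp
  linear_combination q * self_mul_sign s

def pohozhaevFunction (p : ℝ) (n : ℕ) (F φ u u' ψ ψ' : ℝ → ℝ) (r : ℝ) : ℝ :=
  ψ r * r ^ (n - 1) * (p * F (u r) + (p - 1) * u' r * φ (u' r))
    + u r * φ (u' r) * (((n : ℝ) - 1) * ψ r * r ^ (n - 2) - (p - 1) * ψ' r * r ^ (n - 1))

def pohozhaevIntegrand (p : ℝ) (n : ℕ) (f F φ u u' ψ ψ' ψ'' : ℝ → ℝ) (r : ℝ) : ℝ :=
  (p * F (u r) - u r * f (u r)) * (ψ' r * r ^ (n - 1) + ((n : ℝ) - 1) * ψ r * r ^ (n - 2))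
    + p * ψ' r * u r * f (u r) * r ^ (n - 1)
    - φ (u' r) * u r
      * ((p - 1) * r ^ 2 * ψ'' r - ((n : ℝ) - 1) * r * ψ' r + ((n : ℝ) - 1) * ψ r) * r ^ (n - 3)

section

variable {p : ℝ} {n : ℕ} {f F φ φ' u u' u'' ψ ψ' ψ'' : ℝ → ℝ}

theorem hasDerivAt_pohozhaevFunction (hn : 3 ≤ n) {r : ℝ} (hr : r ≠ 0)
    (hφ : HasDerivAt φ (φ' (u' r)) (u' r)) (hφ_euler : u' r * φ' (u' r) = (p - 1) * φ (u' r))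
    (hF : HasDerivAt F (f (u r)) (u r))
    (hu : HasDerivAt u (u' r) r) (hu' : HasDerivAt u' (u'' r) r)
    (hψ : HasDerivAt ψ (ψ' r) r) (hψ' : HasDerivAt ψ' (ψ'' r) r)
    (hode : deriv (fun s => φ (u' s)) r + ((n : ℝ) - 1) / r * φ (u' r) + f (u r) = 0) :
    HasDerivAt (pohozhaevFunction p n F φ u u' ψ ψ')
      (pohozhaevIntegrand p n f F φ u u' ψ ψ' ψ'' r) r := by
  obtain ⟨m, rfl⟩ : ∃ m, n = m + 3 := ⟨n - 3, by omega⟩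
  have hflux : HasDerivAt (fun s => φ (u' s)) (φ' (u' r) * u'' r) r := hφ.comp r hu'
  have hode' : r * (φ' (u' r) * u'' r) + ((m : ℝ) + 2) * φ (u' r) + r * f (u r) = 0 := by
    rw [hflux.deriv] at hode
    field_simp at hode
    push_cast at hode
    linear_combination hode
  have hpow : ∀ k : ℕ, HasDerivAt (fun s : ℝ => s ^ (k + 1)) (((k : ℝ) + 1) * r ^ k) r :=
    fun k => by simpa using hasDerivAt_pow (k + 1) r
  have hH := ((hψ.fun_mul (hpow (m + 1))).fun_mul
      (((hF.comp r hu).const_mul p).fun_add ((hu'.const_mul (p - 1)).fun_mul hflux))).fun_add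
    ((hu.fun_mul hflux).fun_mul
      (((hψ.const_mul (((m + 3 : ℕ) : ℝ) - 1)).fun_mul (hpow m)).fun_sub
        ((hψ'.const_mul (p - 1)).fun_mul (hpow (m + 1)))))
  refine hH.congr_deriv ?_
  simp only [pohozhaevIntegrand, Function.comp_apply, show m + 3 - 1 = m + 2 from rfl,
    show m + 3 - 2 = m + 1 from rfl, show m + 3 - 3 = m from rfl]
  push_cast
  linear_combination
    (u r * (((m : ℝ) + 2) * ψ r * r ^ m - (p - 1) * ψ' r * r ^ (m + 1))
      + p * ψ r * u' r * r ^ (m + 1)) * hode'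
    - ψ r * r ^ (m + 2) * u'' r * hφ_euler

theorem pohozhaevFunction_zero (hn : 3 ≤ n) : pohozhaevFunction p n F φ u u' ψ ψ' 0 = 0 := by
  simp [pohozhaevFunction, zero_pow (show n - 1 ≠ 0 by omega), zero_pow (show n - 2 ≠ 0 by omega)]

theorem pohozhaevFunction_one (hF0 : F 0 = 0) (hu1 : u 1 = 0) :
    pohozhaevFunction p n F φ u u' ψ ψ' 1 = (p - 1) * φ (u' 1) * ψ 1 * u' 1 := by
  simp only [pohozhaevFunction, hu1, hF0, one_pow]
  ring

theorem integral_pohozhaevIntegrand (hn : 3 ≤ n)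
    (hφ : ∀ t, HasDerivAt φ (φ' t) t) (hφ_euler : ∀ t, t * φ' t = (p - 1) * φ t)
    (hF : ∀ x, HasDerivAt F (f x) x) (hF0 : F 0 = 0) (hf : Continuous f)
    (hu : ∀ r ∈ Icc (0:ℝ) 1, HasDerivAt u (u' r) r)
    (hu' : ∀ r ∈ Icc (0:ℝ) 1, HasDerivAt u' (u'' r) r)
    (hψ : ∀ r ∈ Icc (0:ℝ) 1, HasDerivAt ψ (ψ' r) r)
    (hψ' : ∀ r ∈ Icc (0:ℝ) 1, HasDerivAt ψ' (ψ'' r) r)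
    (hψ''c : ContinuousOn ψ'' (Icc (0:ℝ) 1))
    (hode : ∀ r ∈ Ioo (0:ℝ) 1,
      deriv (fun s => φ (u' s)) r + ((n : ℝ) - 1) / r * φ (u' r) + f (u r) = 0)
    (hu1 : u 1 = 0) :
    ∫ r in (0:ℝ)..1, pohozhaevIntegrand p n f F φ u u' ψ ψ' ψ'' r
      = (p - 1) * φ (u' 1) * ψ 1 * u' 1 := by
  have cu := HasDerivAt.continuousOn hu
  have cu' := HasDerivAt.continuousOn hu'
  have cψ := HasDerivAt.continuousOn hψ
  have cψ' := HasDerivAt.continuousOn hψ'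
  have cF : Continuous F := continuous_iff_continuousAt.2 fun x => (hF x).continuousAt
  have cφ : Continuous φ := continuous_iff_continuousAt.2 fun t => (hφ t).continuousAt
  have hHc : ContinuousOn (pohozhaevFunction p n F φ u u' ψ ψ') (Icc 0 1) := by
    unfold pohozhaevFunction; fun_prop
  have hGc : ContinuousOn (pohozhaevIntegrand p n f F φ u u' ψ ψ' ψ'') (Icc 0 1) := by
    unfold pohozhaevIntegrand; fun_prop
  rw [intervalIntegral.integral_eq_sub_of_hasDerivAt_of_le zero_le_one hHc
    (fun r hr => hasDerivAt_pohozhaevFunction hn hr.1.ne' (hφ _) (hφ_euler _) (hF _)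
      (hu r (Ioo_subset_Icc_self hr)) (hu' r (Ioo_subset_Icc_self hr))
      (hψ r (Ioo_subset_Icc_self hr)) (hψ' r (Ioo_subset_Icc_self hr)) (hode r hr))
    (hGc.intervalIntegrable_of_Icc zero_le_one),
    pohozhaevFunction_one hF0 hu1, pohozhaevFunction_zero hn, sub_zero]

end

theorem generalized_pohozhaev_pLaplace_general
    (p : ℝ) (hp : 2 ≤ p) (n : ℕ) (hn : 3 ≤ n)
    (φ : ℝ → ℝ) (hφ : ∀ t : ℝ, φ t = t * |t| ^ (p - 2))
    (f : ℝ → ℝ) (hf : ContDiff ℝ 1 f)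
    (F : ℝ → ℝ) (hF : ∀ x : ℝ, F x = ∫ t in (0:ℝ)..x, f t)
    (u u' u'' : ℝ → ℝ)
    (hu : ∀ r ∈ Icc (0:ℝ) 1, HasDerivAt u (u' r) r)
    (hu' : ∀ r ∈ Icc (0:ℝ) 1, HasDerivAt u' (u'' r) r)
    (ψ ψ' ψ'' : ℝ → ℝ)
    (hψ : ∀ r ∈ Icc (0:ℝ) 1, HasDerivAt ψ (ψ' r) r)
    (hψ' : ∀ r ∈ Icc (0:ℝ) 1, HasDerivAt ψ' (ψ'' r) r)
    (hψ''c : ContinuousOn ψ'' (Icc (0:ℝ) 1))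
    (hode : ∀ r ∈ Ioo (0:ℝ) 1,
      deriv (fun s => φ (u' s)) r + ((n : ℝ) - 1) / r * φ (u' r) + f (u r) = 0)
    (hbc1 : u 1 = 0) :
    ∫ r in (0:ℝ)..1,
        ((p * F (u r) - u r * f (u r))
            * (ψ' r * r ^ (n - 1) + ((n : ℝ) - 1) * ψ r * r ^ (n - 2))
          + p * ψ' r * u r * f (u r) * r ^ (n - 1)
          - φ (u' r) * u r
            * ((p - 1) * r ^ 2 * ψ'' r - ((n : ℝ) - 1) * r * ψ' r
                + ((n : ℝ) - 1) * ψ r)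
            * r ^ (n - 3))
      = (p - 1) * φ (u' 1) * ψ 1 * u' 1 := by
  have hφd : ∀ t, HasDerivAt φ ((p - 1) * |t| ^ (p - 2)) t := fun t => by
    rw [funext hφ, show p - 1 = p - 2 + 1 by ring]
    exact hasDerivAt_mul_abs_rpow (by linarith) t
  have hFd : ∀ x, HasDerivAt F (f x) x := fun x => by
    rw [funext hF]
    exact (hf.continuous.integral_hasStrictDerivAt 0 x).hasDerivAt
  exact integral_pohozhaevIntegrand hn hφd (fun t => by rw [hφ]; ring) hFd (by simp [hF])
    hf.continuous hu hu' hψ hψ' hψ''c hode hbc1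

/-- Generalized radial Pohozhaev identity for the p-Laplacian (Theorem 3.1).
`φ(t) = t |t|^{p-2}`, `u` is C² on `[0,1]`, solves
`(φ(u'))' + ((n-1)/r) φ(u') + f(u) = 0` on `(0,1)` with `u'(0) = u(1) = 0`,
and `ψ` is C² on `[0,1]`.  Here `(ψ r^{n-1})'` has been expanded by the
product rule, and `L_p[ψ] = (p-1) r² ψ'' - (n-1) r ψ' + (n-1) ψ`. -/
theorem generalized_pohozhaev_pLaplace
    (p : ℝ) (hp : 2 ≤ p) (n : ℕ) (hn : 3 ≤ n)
    (φ : ℝ → ℝ) (hφ : ∀ t : ℝ, φ t = t * |t| ^ (p - 2))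
    (f : ℝ → ℝ) (hf : ContDiff ℝ 1 f)
    (F : ℝ → ℝ) (hF : ∀ x : ℝ, F x = ∫ t in (0:ℝ)..x, f t)
    (u u' u'' : ℝ → ℝ)
    (hu : ∀ r ∈ Icc (0:ℝ) 1, HasDerivAt u (u' r) r)
    (hu' : ∀ r ∈ Icc (0:ℝ) 1, HasDerivAt u' (u'' r) r)
    (hu''c : ContinuousOn u'' (Icc (0:ℝ) 1))
    (ψ ψ' ψ'' : ℝ → ℝ)
    (hψ : ∀ r ∈ Icc (0:ℝ) 1, HasDerivAt ψ (ψ' r) r)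
    (hψ' : ∀ r ∈ Icc (0:ℝ) 1, HasDerivAt ψ' (ψ'' r) r)
    (hψ''c : ContinuousOn ψ'' (Icc (0:ℝ) 1))
    (hode : ∀ r ∈ Ioo (0:ℝ) 1,
      deriv (fun s => φ (u' s)) r + ((n : ℝ) - 1) / r * φ (u' r) + f (u r) = 0)
    (hbc0 : u' 0 = 0) (hbc1 : u 1 = 0) :
    ∫ r in (0:ℝ)..1,
        ((p * F (u r) - u r * f (u r))
            * (ψ' r * r ^ (n - 1) + ((n : ℝ) - 1) * ψ r * r ^ (n - 2))
          + p * ψ' r * u r * f (u r) * r ^ (n - 1)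
          - φ (u' r) * u r
            * ((p - 1) * r ^ 2 * ψ'' r - ((n : ℝ) - 1) * r * ψ' r
                + ((n : ℝ) - 1) * ψ r)
            * r ^ (n - 3))
      = (p - 1) * φ (u' 1) * ψ 1 * u' 1 :=
  generalized_pohozhaev_pLaplace_general p hp n hn φ hφ f hf F hF u u' u'' hu hu' ψ ψ' ψ'' hψ hψ'
    hψ''c hode hbc1
end

section
/- Let p ≥ 2 and n ≥ 3 (p real, n an integer), let φ(t) = t|t|^{p-2}, and let f : ℝ → ℝ be continuously differentiable. Let u ∈ C²([0,1]) satisfy (φ(u'(r)))' + ((n-1)/r) φ(u'(r)) + f(u(r)) = 0 for 0 < r < 1, let ψ ∈ C²([0,1]), and set v(r) = ψ(r) u'(r). Then for 0 < r < 1 one has the pointwise identity [ r^{n-1} ( (p−1) φ(u'(r)) v(r) − u(r) φ'(u'(r)) v'(r) ) ]' + r^{n-1} v(r) [ (p−1) f(u(r)) − u(r) f'(u(r)) ] = p r^{n-1} ψ'(r) u(r) f(u(r)) − r^{n-3} u(r) φ(u'(r)) L_p[ψ](r), where L_p[ψ](r) = (p−1) r² ψ''(r) − (n−1) r ψ'(r)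 + (n−1) ψ(r). -/
/-!
The flux `r^{n-1}((p-1)φ(u')v - uφ'(u')v')` contains `u''`, which need not be differentiable.
Multiplying the equation by `r` and using Euler's relation `(p-1)φ(t) = tφ'(t)`, the flux agrees
near every `r ∈ (0,1)` with
`r^{n-1}(p-1)φ(u')(ψu' - uψ') + (n-1)r^{n-2}uψφ(u') + r^{n-1}uψf(u)`,
which only involves `u`, `φ(u')` and `ψ` up to first order. Differentiating this expression and
eliminating `u''` with the equation once more gives the identity.
-/

open Set Real Filter Topology

theorem hasDerivAt_mul_of_continuousAt_zero {𝕜 : Type*} [NontriviallyNormedField 𝕜]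
    {g : 𝕜 → 𝕜} (hg : ContinuousAt g 0) : HasDerivAt (fun t => t * g t) (g 0) 0 := by
  rw [hasDerivAt_iff_tendsto_slope]
  refine (hg.tendsto.mono_left nhdsWithin_le_nhds).congr' ?_
  filter_upwards [self_mem_nhdsWithin] with t (ht : t ≠ 0)
  rw [slope_def_field, zero_mul, sub_zero, sub_zero, mul_div_cancel_left₀ _ ht]

theorem hasDerivAt_mul_abs_rpow_sub_two_of_pos {p t : ℝ} (ht : 0 < t) :
    HasDerivAt (fun t : ℝ => t * |t| ^ (p - 2)) ((p - 1) * |t| ^ (p - 2)) t := by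
  have hpow : HasDerivAt (fun x : ℝ => x ^ (p - 1)) ((p - 1) * t ^ (p - 1 - 1)) t :=
    hasDerivAt_rpow_const (Or.inl ht.ne')
  rw [abs_of_pos ht, show p - 2 = p - 1 - 1 by ring]
  refine hpow.congr_of_eventuallyEq ?_
  filter_upwards [Ioi_mem_nhds ht] with x (hx : 0 < x)
  rw [abs_of_pos hx, rpow_sub_one hx.ne', mul_div_cancel₀ _ hx.ne']

theorem hasDerivAt_mul_abs_rpow_sub_two {p : ℝ} (hp : 2 ≤ p) (t : ℝ) :
    HasDerivAt (fun t : ℝ => t * |t| ^ (p - 2)) ((p - 1) * |t| ^ (p - 2)) t := by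
  rcases lt_trichotomy t 0 with ht | rfl | ht
  · have hodd : (fun t : ℝ => t * |t| ^ (p - 2)) = fun x => -((-x) * |-x| ^ (p - 2)) := by
      ext x; rw [abs_neg]; ring
    have := ((hasDerivAt_mul_abs_rpow_sub_two_of_pos (p := p) (neg_pos.2 ht)).comp t
      (hasDerivAt_neg t)).neg
    rw [hodd]
    exact this.congr_deriv (by rw [abs_neg]; ring)
  · have hcont : ContinuousAt (fun t : ℝ => |t| ^ (p - 2)) 0 :=
      (continuousAt_rpow_const _ _ (Or.inr (by linarith))).comp continuous_abs.continuousAt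
    refine (hasDerivAt_mul_of_continuousAt_zero hcont).congr_deriv ?_
    rcases hp.eq_or_lt with rfl | hp2
    · norm_num
    · simp [zero_rpow (by linarith : p - 2 ≠ 0)]
  · exact hasDerivAt_mul_abs_rpow_sub_two_of_pos ht

section HomogeneousFlux

variable {p : ℝ} {φ φd f u u' u'' ψ ψ' ψ'' : ℝ → ℝ}

theorem flux_eq_of_ode (hhom : ∀ t, (p - 1) * φ t = t * φd t) (k : ℕ) {s : ℝ}
    (hode : s * (φd (u' s) * u'' s) = -((k + 1 : ℝ) * φ (u' s)) - s * f (u s)) :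
    s ^ (k + 1) * ((p - 1) * φ (u' s) * (ψ s * u' s)
        - u s * (φd (u' s) * (ψ' s * u' s + ψ s * u'' s)))
      = s ^ (k + 1) * ((p - 1) * φ (u' s) * (ψ s * u' s - u s * ψ' s))
        + (k + 1) * s ^ k * (u s * ψ s * φ (u' s))
        + s ^ (k + 1) * (u s * ψ s * f (u s)) := by
  linear_combination (s ^ (k + 1) * (u s * ψ' s)) * hhom (u' s) - (s ^ k * (u s * ψ s)) * hode

theorem divergence_identity_of_homogeneous (hφ : ∀ t, HasDerivAt φ (φd t) t)
    (hhom : ∀ t, (p - 1) * φ t = t * φd t) {n : ℕ} (hn : 3 ≤ n) {r : ℝ} (hr : r ≠ 0)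
    (hf : DifferentiableAt ℝ f (u r))
    (hu : HasDerivAt u (u' r) r) (hu' : ∀ᶠ s in 𝓝 r, HasDerivAt u' (u'' s) s)
    (hψ : HasDerivAt ψ (ψ' r) r) (hψ' : HasDerivAt ψ' (ψ'' r) r)
    (hode : ∀ᶠ s in 𝓝 r,
      deriv (fun x => φ (u' x)) s + ((n : ℝ) - 1) / s * φ (u' s) + f (u s) = 0) :
    deriv (fun s =>
          s ^ (n - 1) * ((p - 1) * φ (u' s) * (ψ s * u' s)
            - u s * (φd (u' s) * (ψ' s * u' s + ψ s * u'' s)))) r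
        + r ^ (n - 1) * (ψ r * u' r) * ((p - 1) * f (u r) - u r * deriv f (u r))
      = p * r ^ (n - 1) * ψ' r * u r * f (u r)
        - r ^ (n - 3) * u r * φ (u' r)
            * ((p - 1) * r ^ 2 * ψ'' r - ((n : ℝ) - 1) * r * ψ' r + ((n : ℝ) - 1) * ψ r) := by
  obtain ⟨m, rfl⟩ : ∃ m, n = m + 3 := ⟨n - 3, by omega⟩
  have hA : ∀ᶠ s in 𝓝 r, HasDerivAt (fun x => φ (u' x)) (φd (u' s) * u'' s) s :=
    hu'.mono fun s hs => (hφ (u' s)).comp s hs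
  have hode_mul : ∀ᶠ s in 𝓝 r,
      s * (φd (u' s) * u'' s) = -(((m + 1 : ℕ) + 1 : ℝ) * φ (u' s)) - s * f (u s) := by
    filter_upwards [hA, hode, eventually_ne_nhds hr] with s hAs hodes hs
    rw [hAs.deriv] at hodes
    field_simp at hodes
    push_cast at hodes ⊢
    linear_combination hodes
  have hflux := hode_mul.mono fun s hs => flux_eq_of_ode (ψ := ψ) (ψ' := ψ') hhom (m + 1) hs
  have hreduced : HasDerivAt (fun s =>
      s ^ (m + 1 + 1) * ((p - 1) * φ (u' s) * (ψ s * u' s - u s * ψ' s))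
        + ((m + 1 : ℕ) + 1 : ℝ) * s ^ (m + 1) * (u s * ψ s * φ (u' s))
        + s ^ (m + 1 + 1) * (u s * ψ s * f (u s))) _ r :=
    (((hasDerivAt_pow (m + 2) r).mul (((hA.self_of_nhds).const_mul (p - 1)).mul
        ((hψ.mul hu'.self_of_nhds).sub (hu.mul hψ')))).add
      (((hasDerivAt_pow (m + 1) r).const_mul ((m + 1 : ℕ) + 1 : ℝ)).mul
        ((hu.mul hψ).mul hA.self_of_nhds))).add
    ((hasDerivAt_pow (m + 2) r).mul ((hu.mul hψ).mul (hf.hasDerivAt.comp r hu)))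
  rw [show m + 3 - 1 = m + 1 + 1 from rfl, Filter.EventuallyEq.deriv_eq hflux, hreduced.deriv,
    show m + 3 - 3 = m by omega]
  have hode_mul_r := hode_mul.self_of_nhds
  simp only [Pi.mul_apply, Pi.sub_apply]
  push_cast at hode_mul_r ⊢
  linear_combination (r ^ (m + 2) * ψ r * u'' r) * hhom (u' r)
    + (r ^ (m + 1) * (p - 1) * (ψ r * u' r - u r * ψ' r)
        + ((m:ℝ) + 2) * r ^ m * (u r * ψ r) + r ^ (m + 1) * (ψ r * u' r)) * hode_mul_r

end HomogeneousFlux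

theorem pLaplace_divergence_identity_general
    (p : ℝ) (hp : 2 ≤ p) (n : ℕ) (hn : 3 ≤ n)
    (φ φd : ℝ → ℝ)
    (hφ : ∀ t : ℝ, φ t = t * |t| ^ (p - 2))
    (hφd : ∀ t : ℝ, φd t = (p - 1) * |t| ^ (p - 2))
    (f : ℝ → ℝ) (hf : ContDiff ℝ 1 f)
    (u u' u'' : ℝ → ℝ)
    (hu : ∀ r ∈ Icc (0:ℝ) 1, HasDerivAt u (u' r) r)
    (hu' : ∀ r ∈ Icc (0:ℝ) 1, HasDerivAt u' (u'' r) r)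
    (ψ ψ' ψ'' : ℝ → ℝ)
    (hψ : ∀ r ∈ Icc (0:ℝ) 1, HasDerivAt ψ (ψ' r) r)
    (hψ' : ∀ r ∈ Icc (0:ℝ) 1, HasDerivAt ψ' (ψ'' r) r)
    (hode : ∀ r ∈ Ioo (0:ℝ) 1,
      deriv (fun s => φ (u' s)) r + ((n : ℝ) - 1) / r * φ (u' r) + f (u r) = 0) :
    ∀ r ∈ Ioo (0:ℝ) 1,
      deriv (fun s =>
          s ^ (n - 1) * ((p - 1) * φ (u' s) * (ψ s * u' s)
            - u s * (φd (u' s) * (ψ' s * u' s + ψ s * u'' s)))) r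
        + r ^ (n - 1) * (ψ r * u' r)
            * ((p - 1) * f (u r) - u r * deriv f (u r))
      = p * r ^ (n - 1) * ψ' r * u r * f (u r)
        - r ^ (n - 3) * u r * φ (u' r)
            * ((p - 1) * r ^ 2 * ψ'' r - ((n : ℝ) - 1) * r * ψ' r
                + ((n : ℝ) - 1) * ψ r) := by
  intro r hr
  have hIoo : Ioo (0:ℝ) 1 ∈ 𝓝 r := Ioo_mem_nhds hr.1 hr.2
  have hIcc : ∀ᶠ s in 𝓝 r, s ∈ Icc (0:ℝ) 1 := mem_of_superset hIoo Ioo_subset_Icc_self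
  obtain rfl : φ = fun t => t * |t| ^ (p - 2) := funext hφ
  obtain rfl : φd = fun t => (p - 1) * |t| ^ (p - 2) := funext hφd
  exact divergence_identity_of_homogeneous (hasDerivAt_mul_abs_rpow_sub_two hp)
    (fun t => by ring) hn hr.1.ne' (hf.differentiable one_ne_zero _) (hu r hIcc.self_of_nhds)
    (hIcc.mono hu') (hψ r hIcc.self_of_nhds) (hψ' r hIcc.self_of_nhds)
    (eventually_of_mem hIoo hode)

/-- The pointwise divergence identity (3.5) used in the proof of the
generalized p-Laplace Pohozhaev identity.  `φ(t) = t|t|^{p-2}`,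
`φ'(t) = (p-1)|t|^{p-2}` (denoted `φd`), `u` is C² on `[0,1]` solving
`(φ(u'))' + ((n-1)/r) φ(u') + f(u) = 0` on `(0,1)`, `ψ` is C² on `[0,1]`,
`v = ψ u'` and `v' = ψ' u' + ψ u''`.  Then on `(0,1)`:
`[r^{n-1}((p-1)φ(u')v - u φ'(u')v')]' + r^{n-1} v ((p-1)f(u) - u f'(u))
  = p r^{n-1} ψ' u f(u) - r^{n-3} u φ(u') L_p[ψ]`,
with `L_p[ψ] = (p-1) r² ψ'' - (n-1) r ψ' + (n-1) ψ`. -/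
theorem pLaplace_divergence_identity
    (p : ℝ) (hp : 2 ≤ p) (n : ℕ) (hn : 3 ≤ n)
    (φ φd : ℝ → ℝ)
    (hφ : ∀ t : ℝ, φ t = t * |t| ^ (p - 2))
    (hφd : ∀ t : ℝ, φd t = (p - 1) * |t| ^ (p - 2))
    (f : ℝ → ℝ) (hf : ContDiff ℝ 1 f)
    (u u' u'' : ℝ → ℝ)
    (hu : ∀ r ∈ Icc (0:ℝ) 1, HasDerivAt u (u' r) r)
    (hu' : ∀ r ∈ Icc (0:ℝ) 1, HasDerivAt u' (u'' r) r)
    (hu''c : ContinuousOn u'' (Icc (0:ℝ) 1))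
    (ψ ψ' ψ'' : ℝ → ℝ)
    (hψ : ∀ r ∈ Icc (0:ℝ) 1, HasDerivAt ψ (ψ' r) r)
    (hψ' : ∀ r ∈ Icc (0:ℝ) 1, HasDerivAt ψ' (ψ'' r) r)
    (hψ''c : ContinuousOn ψ'' (Icc (0:ℝ) 1))
    (hode : ∀ r ∈ Ioo (0:ℝ) 1,
      deriv (fun s => φ (u' s)) r + ((n : ℝ) - 1) / r * φ (u' r) + f (u r) = 0) :
    ∀ r ∈ Ioo (0:ℝ) 1,
      deriv (fun s =>
          s ^ (n - 1) * ((p - 1) * φ (u' s) * (ψ s * u' s)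
            - u s * (φd (u' s) * (ψ' s * u' s + ψ s * u'' s)))) r
        + r ^ (n - 1) * (ψ r * u' r)
            * ((p - 1) * f (u r) - u r * deriv f (u r))
      = p * r ^ (n - 1) * ψ' r * u r * f (u r)
        - r ^ (n - 3) * u r * φ (u' r)
            * ((p - 1) * r ^ 2 * ψ'' r - ((n : ℝ) - 1) * r * ψ' r
                + ((n : ℝ) - 1) * ψ r) :=
  pLaplace_divergence_identity_general p hp n hn φ φd hφ hφd f hf u u' u'' hu hu' ψ ψ' ψ'' hψ hψ'
    hode
end

section
/- Let n ≥ 2 be an integer, D an open subset of ℝⁿ, and f : ℝ → ℝ continuously differentiable. Let u : ℝⁿ → ℝ be three times continuously differentiable and satisfy Δu(x) + f(u(x)) = 0 for all x ∈ D. Then the function z(x) = x · ∇u(x) (the inner product of x with the gradient of u) satisfies Δz(x) + f'(u(x)) z(x) = −2 f(u(x)) for all x ∈ D. -/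
/-!
The Euler operator `x · ∇` commutes with a directional derivative up to that derivative itself,
`∂ᵥ (x · ∇g) = ∂ᵥ g + x · ∇(∂ᵥ g)`, by symmetry of second derivatives. Applying this twice and
summing over the coordinate directions gives `Δ(x · ∇u) = x · ∇(Δu) + 2 Δu` for `u ∈ C³`. Since `D`
is open, `Δu = -f ∘ u` near every point of `D`, so the chain rule turns `x · ∇(Δu)` into
`-f'(u) (x · ∇u)`.
-/

open Set

/-- The Laplacian `Δg(x) = Σᵢ ∂²g/∂xᵢ²(x)` on Euclidean space. -/
noncomputable def lapl {n : ℕ} (g : EuclideanSpace ℝ (Fin n) → ℝ)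
    (x : EuclideanSpace ℝ (Fin n)) : ℝ :=
  ∑ i : Fin n,
    fderiv ℝ (fun y => fderiv ℝ g y (EuclideanSpace.single i 1)) x
      (EuclideanSpace.single i 1)

/-- `z(x) = x · ∇u(x) = Σᵢ xᵢ ∂u/∂xᵢ(x)`. -/
noncomputable def xDotGrad {n : ℕ} (u : EuclideanSpace ℝ (Fin n) → ℝ)
    (x : EuclideanSpace ℝ (Fin n)) : ℝ :=
  ∑ i : Fin n, x i * fderiv ℝ u x (EuclideanSpace.single i 1)

open Filter Topology

section EulerOperator

variable {E F : Type*} [NormedAddCommGroup E] [NormedSpace ℝ E]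
  [NormedAddCommGroup F] [NormedSpace ℝ F]

noncomputable def dirDeriv (v : E) (g : E → F) (y : E) : F := fderiv ℝ g y v

noncomputable def eulerOperator (g : E → F) (y : E) : F := fderiv ℝ g y y

lemma ContDiff.dirDeriv {m n : WithTop ℕ∞} {g : E → F} (hg : ContDiff ℝ n g) (hmn : m + 1 ≤ n)
    (v : E) : ContDiff ℝ m (dirDeriv v g) :=
  (hg.fderiv_right hmn).clm_apply contDiff_const

lemma ContDiff.eulerOperator {m n : WithTop ℕ∞} {g : E → F} (hg : ContDiff ℝ n g)
    (hmn : m + 1 ≤ n) : ContDiff ℝ m (eulerOperator g) :=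
  (hg.fderiv_right hmn).clm_apply contDiff_id

lemma dirDeriv_add {g h : E → F} {v : E} (hg : Differentiable ℝ g) (hh : Differentiable ℝ h) :
    dirDeriv v (g + h) = dirDeriv v g + dirDeriv v h := by
  ext y
  simp [dirDeriv, fderiv_add (hg y) (hh y)]

lemma eulerOperator_fun_sum {ι : Type*} (s : Finset ι) {g : ι → E → F} {y : E}
    (hg : ∀ i ∈ s, DifferentiableAt ℝ (g i) y) :
    eulerOperator (fun z => ∑ i ∈ s, g i z) y = ∑ i ∈ s, eulerOperator (g i) y := by
  simp [eulerOperator, fderiv_fun_sum hg]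

lemma Filter.EventuallyEq.eulerOperator_eq {g h : E → F} {y : E} (hgh : g =ᶠ[𝓝 y] h) :
    eulerOperator g y = eulerOperator h y := by
  rw [eulerOperator, eulerOperator, hgh.fderiv_eq]

lemma eulerOperator_comp {f : ℝ → F} {u : E → ℝ} {y : E}
    (hf : DifferentiableAt ℝ f (u y)) (hu : DifferentiableAt ℝ u y) :
    eulerOperator (f ∘ u) y = eulerOperator u y • deriv f (u y) := by
  simp [eulerOperator, (hf.hasDerivAt.hasFDerivAt.comp y hu.hasFDerivAt).fderiv]

lemma dirDeriv_eulerOperator {g : E → F} (hg : ContDiff ℝ 2 g) (v : E) :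
    dirDeriv v (eulerOperator g) = dirDeriv v g + eulerOperator (dirDeriv v g) := by
  ext y
  have hg' : Differentiable ℝ (fderiv ℝ g) :=
    (hg.fderiv_right (m := 1) (by norm_num)).differentiable (by norm_num)
  have hsymm := (hg.contDiffAt (x := y)).isSymmSndFDerivAt (by simp)
  change fderiv ℝ (fun z => fderiv ℝ g z z) y v
    = fderiv ℝ g y v + fderiv ℝ (fun z => fderiv ℝ g z v) y y
  rw [fderiv_clm_apply (hg' y) differentiableAt_fun_id,
    fderiv_clm_apply (hg' y) (differentiableAt_const v)]
  simp [hsymm v y]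

lemma dirDeriv_dirDeriv_eulerOperator {g : E → F} (hg : ContDiff ℝ 3 g) (v : E) :
    dirDeriv v (dirDeriv v (eulerOperator g)) =
      (2 : ℝ) • dirDeriv v (dirDeriv v g) + eulerOperator (dirDeriv v (dirDeriv v g)) := by
  have hg' : ContDiff ℝ 2 (dirDeriv v g) := hg.dirDeriv (by norm_num) v
  rw [dirDeriv_eulerOperator (hg.of_le (by norm_num)) v,
    dirDeriv_add (hg'.differentiable (by norm_num))
      ((hg'.eulerOperator (m := 1) (by norm_num)).differentiable (by norm_num)),
    dirDeriv_eulerOperator hg' v]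
  module

end EulerOperator

lemma xDotGrad_eq_eulerOperator {n : ℕ} (u : EuclideanSpace ℝ (Fin n) → ℝ) :
    xDotGrad u = eulerOperator u := by
  ext x
  have hx : x = ∑ i, x i • EuclideanSpace.single i (1 : ℝ) := by
    simpa using ((EuclideanSpace.basisFun (Fin n) ℝ).sum_repr x).symm
  calc xDotGrad u x = fderiv ℝ u x (∑ i, x i • EuclideanSpace.single i (1 : ℝ)) := by
        simp [xDotGrad]
    _ = eulerOperator u x := by rw [eulerOperator, ← hx]

lemma lapl_eulerOperator {n : ℕ} {u : EuclideanSpace ℝ (Fin n) → ℝ} (hu : ContDiff ℝ 3 u)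
    (x : EuclideanSpace ℝ (Fin n)) :
    lapl (eulerOperator u) x = 2 * lapl u x + eulerOperator (lapl u) x := by
  set e : Fin n → EuclideanSpace ℝ (Fin n) := fun i => EuclideanSpace.single i 1
  have hlapl : ∀ g : EuclideanSpace ℝ (Fin n) → ℝ,
      lapl g = fun y => ∑ i, dirDeriv (e i) (dirDeriv (e i) g) y := fun _ => rfl
  rw [hlapl, hlapl, eulerOperator_fun_sum]
  · simp only [dirDeriv_dirDeriv_eulerOperator hu, Pi.add_apply, Pi.smul_apply, smul_eq_mul,
      Finset.sum_add_distrib, Finset.mul_sum]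
  · intro i _
    exact ((hu.dirDeriv (m := 2) (by norm_num) _).dirDeriv (m := 1) (by norm_num) _).differentiable
      (by norm_num) x

theorem xDotGrad_equation_general
    (n : ℕ) (D : Set (EuclideanSpace ℝ (Fin n))) (hD : IsOpen D)
    (f : ℝ → ℝ) (hf : ContDiff ℝ 1 f)
    (u : EuclideanSpace ℝ (Fin n) → ℝ) (hu : ContDiff ℝ 3 u)
    (hode : ∀ x ∈ D, lapl u x + f (u x) = 0) :
    ∀ x ∈ D,
      lapl (xDotGrad u) x + deriv f (u x) * xDotGrad u x = -2 * f (u x) := by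
  intro x hx
  have hlocal : lapl u =ᶠ[𝓝 x] (-f) ∘ u := by
    filter_upwards [hD.mem_nhds hx] with y hy
    exact eq_neg_of_add_eq_zero_left (hode y hy)
  have hchain : eulerOperator (lapl u) x = -(deriv f (u x) * eulerOperator u x) := by
    rw [hlocal.eulerOperator_eq, eulerOperator_comp ((hf.differentiable one_ne_zero).neg _)
      ((hu.differentiable (by norm_num)) x), deriv.neg, smul_eq_mul, mul_neg, mul_comm]
  rw [xDotGrad_eq_eulerOperator, lapl_eulerOperator hu, hchain]
  linarith [hode x hx]

/-- If `Δu + f(u) = 0` on an open set `D ⊆ ℝⁿ`, then `z = x · ∇u` satisfies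
`Δz + f'(u) z = -2 f(u)` on `D` (equation (1.3)). -/
theorem xDotGrad_equation
    (n : ℕ) (hn : 2 ≤ n) (D : Set (EuclideanSpace ℝ (Fin n))) (hD : IsOpen D)
    (f : ℝ → ℝ) (hf : ContDiff ℝ 1 f)
    (u : EuclideanSpace ℝ (Fin n) → ℝ) (hu : ContDiff ℝ 3 u)
    (hode : ∀ x ∈ D, lapl u x + f (u x) = 0) :
    ∀ x ∈ D,
      lapl (xDotGrad u) x + deriv f (u x) * xDotGrad u x = -2 * f (u x) :=
  xDotGrad_equation_general n D hD f hf u hu hode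
end

section
/- Let p > 1 and λ ∈ ℝ. Let u ∈ C²([0,1]) satisfy u''(r) + (2/r) u'(r) + λ u(r) + u(r)|u(r)|^{p-1} = 0 for 0 < r < 1, with u'(0) = u(1) = 0, and let ψ ∈ C³([0,1]) with ψ(0) = 0. Then ∫₀¹ [ ((p+3)/(p+1)) ψ'(r) r² − (2(p−1)/(p+1)) ψ(r) r ] |u(r)|^{p+1} dr + (1/2) ∫₀¹ ( ψ'''(r) + 4λ ψ'(r) ) u(r)² r² dr = ψ(1) (u'(1))². -/
/-!
With `f(u) = λu + u|u|^{p-1}` and its primitive `F(u) = λu²/2 + |u|^{p+1}/(p+1)`, multiplying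
`r u'' + 2u' + r f(u) = 0` by `r ψ u' + (ψ - r ψ'/2) u` (the Pohozhaev multiplier together with
the multiple of `u` that cancels the resulting `u'²` terms) exhibits the integrand as the
derivative of an explicit functional of `(r, u, u')`. That functional vanishes at `0` because
`ψ(0) = 0`, and equals `ψ(1) u'(1)²/2` at `1` because `u(1) = 0`, so the identity is the
fundamental theorem of calculus. The computation uses only `F' = f`, so it works for any
continuous nonlinearity.
-/

open Set Real

theorem abs_rpow_sub_one_mul_self_mul_self {p : ℝ} (hp : 0 < p) (x : ℝ) :
    |x| ^ (p - 1) * x * x = |x| ^ (p + 1) := by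
  rw [mul_assoc, ← abs_mul_abs_self, ← mul_assoc,
    ← rpow_add_one' (abs_nonneg x) (by linarith), ← rpow_add_one' (abs_nonneg x) (by linarith)]
  ring_nf

theorem hasDerivAt_mul_sq_div_two_add_abs_rpow_div {p : ℝ} (hp : 0 < p) (lam x : ℝ) :
    HasDerivAt (fun x => lam * x ^ 2 / 2 + |x| ^ (p + 1) / (p + 1))
      (lam * x + |x| ^ (p - 1) * x) x := by
  refine ((((hasDerivAt_pow 2 x).const_mul lam).div_const 2).add
    ((hasDerivAt_abs_rpow x (by linarith : 1 < p + 1)).div_const (p + 1))).congr_deriv ?_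
  rw [show p + 1 - 2 = p - 1 by ring]
  field_simp
  ring

namespace Pohozhaev

variable {F f ψ ψ' ψ'' ψ''' u u' u'' : ℝ → ℝ}

noncomputable def functional (F ψ ψ' ψ'' u u' : ℝ → ℝ) (r : ℝ) : ℝ :=
  ψ r * r ^ 2 * (u' r ^ 2 / 2 + F (u r)) + (r * ψ r - r ^ 2 * ψ' r / 2) * (u r * u' r)
    + (ψ r - r * ψ' r + r ^ 2 * ψ'' r / 2) * u r ^ 2 / 2

noncomputable def density (F f ψ ψ' ψ''' u : ℝ → ℝ) (r : ℝ) : ℝ :=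
  (ψ' r * r ^ 2 + 2 * r * ψ r) * F (u r) - (r * ψ r - r ^ 2 * ψ' r / 2) * (u r * f (u r))
    + r ^ 2 * ψ''' r * u r ^ 2 / 4

theorem hasDerivAt_functional {r : ℝ} (hF : HasDerivAt F (f (u r)) (u r))
    (hu : HasDerivAt u (u' r) r) (hu' : HasDerivAt u' (u'' r) r)
    (hψ : HasDerivAt ψ (ψ' r) r) (hψ' : HasDerivAt ψ' (ψ'' r) r)
    (hψ'' : HasDerivAt ψ'' (ψ''' r) r) (hr : r ≠ 0)
    (hode : u'' r + 2 / r * u' r + f (u r) = 0) :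
    HasDerivAt (functional F ψ ψ' ψ'' u u') (density F f ψ ψ' ψ''' u r) r := by
  have hsq : HasDerivAt (fun s : ℝ => s ^ 2) (2 * r) r := by simpa using hasDerivAt_pow 2 r
  have hid := hasDerivAt_id' r
  refine ((((hψ.mul hsq).mul (((hu'.pow 2).div_const 2).add (hF.comp r hu))).add
    (((hid.mul hψ).sub ((hsq.mul hψ').div_const 2)).mul (hu.mul hu'))).add
    ((((hψ.sub (hid.mul hψ')).add ((hsq.mul hψ'').div_const 2)).mul (hu.pow 2)).div_const 2)
    ).congr_deriv ?_
  have hode' : r * u'' r + 2 * u' r + r * f (u r) = 0 := by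
    field_simp at hode; linear_combination hode
  simp only [density, Pi.add_apply, Pi.sub_apply, Pi.mul_apply, Pi.pow_apply, Function.comp_apply]
  linear_combination (r * ψ r * u' r + (ψ r - r * ψ' r / 2) * u r) * hode'

theorem integral_density (hF : ∀ x, HasDerivAt F (f x) x) (hf : Continuous f)
    (hu : ∀ r ∈ Icc (0:ℝ) 1, HasDerivAt u (u' r) r)
    (hu' : ∀ r ∈ Icc (0:ℝ) 1, HasDerivAt u' (u'' r) r)
    (hψ : ∀ r ∈ Icc (0:ℝ) 1, HasDerivAt ψ (ψ' r) r)
    (hψ' : ∀ r ∈ Icc (0:ℝ) 1, HasDerivAt ψ' (ψ'' r) r)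
    (hψ'' : ∀ r ∈ Icc (0:ℝ) 1, HasDerivAt ψ'' (ψ''' r) r)
    (hψ'''c : ContinuousOn ψ''' (Icc (0:ℝ) 1)) (hψ0 : ψ 0 = 0)
    (hode : ∀ r ∈ Ioo (0:ℝ) 1, u'' r + 2 / r * u' r + f (u r) = 0) (hbc1 : u 1 = 0) :
    ∫ r in (0:ℝ)..1, density F f ψ ψ' ψ''' u r = ψ 1 * (u' 1 ^ 2 / 2 + F 0) := by
  have hFc : Continuous F := continuous_iff_continuousAt.2 fun x => (hF x).continuousAt
  have huc := HasDerivAt.continuousOn hu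
  have hu'c := HasDerivAt.continuousOn hu'
  have hψc := HasDerivAt.continuousOn hψ
  have hψ'c := HasDerivAt.continuousOn hψ'
  have hψ''c := HasDerivAt.continuousOn hψ''
  have hdensity : ContinuousOn (density F f ψ ψ' ψ''' u) (Icc 0 1) := by
    unfold density; fun_prop
  rw [intervalIntegral.integral_eq_sub_of_hasDeriv_right_of_le zero_le_one
    (by unfold functional; fun_prop)
    (fun r hr => (hasDerivAt_functional (hF _) (hu r (Ioo_subset_Icc_self hr))
      (hu' r (Ioo_subset_Icc_self hr)) (hψ r (Ioo_subset_Icc_self hr))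
      (hψ' r (Ioo_subset_Icc_self hr)) (hψ'' r (Ioo_subset_Icc_self hr)) hr.1.ne'
      (hode r hr)).hasDerivWithinAt)
    (hdensity.intervalIntegrable_of_Icc zero_le_one)]
  simp [functional, hψ0, hbc1]

theorem density_mul_add_abs_rpow_mul {p : ℝ} (hp : 0 < p) (lam r : ℝ) :
    density (fun x => lam * x ^ 2 / 2 + |x| ^ (p + 1) / (p + 1))
      (fun x => lam * x + |x| ^ (p - 1) * x) ψ ψ' ψ''' u r =
      1 / 2 * (((p + 3) / (p + 1) * ψ' r * r ^ 2 - 2 * (p - 1) / (p + 1) * ψ r * r)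
        * |u r| ^ (p + 1)) + 1 / 4 * ((ψ''' r + 4 * lam * ψ' r) * (u r) ^ 2 * r ^ 2) := by
  rw [density, ← abs_rpow_sub_one_mul_self_mul_self hp (u r)]
  field_simp
  ring

end Pohozhaev

theorem pohozhaev_example1_identity_general
    (p : ℝ) (hp : 1 < p) (lam : ℝ)
    (u u' u'' : ℝ → ℝ)
    (hu : ∀ r ∈ Icc (0:ℝ) 1, HasDerivAt u (u' r) r)
    (hu' : ∀ r ∈ Icc (0:ℝ) 1, HasDerivAt u' (u'' r) r)
    (ψ ψ' ψ'' ψ''' : ℝ → ℝ)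
    (hψ : ∀ r ∈ Icc (0:ℝ) 1, HasDerivAt ψ (ψ' r) r)
    (hψ' : ∀ r ∈ Icc (0:ℝ) 1, HasDerivAt ψ' (ψ'' r) r)
    (hψ'' : ∀ r ∈ Icc (0:ℝ) 1, HasDerivAt ψ'' (ψ''' r) r)
    (hψ'''c : ContinuousOn ψ''' (Icc (0:ℝ) 1))
    (hψ0 : ψ 0 = 0)
    (hode : ∀ r ∈ Ioo (0:ℝ) 1,
      u'' r + 2 / r * u' r + lam * u r + u r * |u r| ^ (p - 1) = 0)
    (hbc1 : u 1 = 0) :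
    (∫ r in (0:ℝ)..1,
        ((p + 3) / (p + 1) * ψ' r * r ^ 2
            - 2 * (p - 1) / (p + 1) * ψ r * r) * |u r| ^ (p + 1))
      + 1 / 2 * ∫ r in (0:ℝ)..1,
          (ψ''' r + 4 * lam * ψ' r) * (u r) ^ 2 * r ^ 2
      = ψ 1 * (u' 1) ^ 2 := by
  have hp0 : 0 < p := by linarith
  have hf : Continuous fun x : ℝ => lam * x + |x| ^ (p - 1) * x := by
    have := continuous_abs.rpow_const fun _ => Or.inr (by linarith : 0 ≤ p - 1)
    fun_prop
  have key := Pohozhaev.integral_density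
    (hasDerivAt_mul_sq_div_two_add_abs_rpow_div hp0 lam) hf hu hu' hψ hψ' hψ'' hψ'''c hψ0
    (fun r hr => by linear_combination hode r hr) hbc1
  have huc := HasDerivAt.continuousOn hu
  have hψc := HasDerivAt.continuousOn hψ
  have hψ'c := HasDerivAt.continuousOn hψ'
  have hpow : ContinuousOn (fun r => |u r| ^ (p + 1)) (Icc 0 1) :=
    huc.abs.rpow_const fun _ _ => Or.inr (by linarith)
  rw [intervalIntegral.integral_congr fun r _ =>
      Pohozhaev.density_mul_add_abs_rpow_mul hp0 lam r,
    intervalIntegral.integral_add (ContinuousOn.intervalIntegrable_of_Icc zero_le_one (by fun_prop))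
      (ContinuousOn.intervalIntegrable_of_Icc zero_le_one (by fun_prop)),
    intervalIntegral.integral_const_mul, intervalIntegral.integral_const_mul] at key
  have hF0 : lam * 0 ^ 2 / 2 + |0| ^ (p + 1) / (p + 1) = 0 := by
    simp [zero_rpow (by linarith : p + 1 ≠ 0)]
  linear_combination 2 * key + 2 * ψ 1 * hF0

/-- The Pohozhaev-type identity of Example 1: for `f(u) = λu + u|u|^{p-1}`
in dimension 3, a C² solution `u` of `u'' + (2/r)u' + λu + u|u|^{p-1} = 0`
on `(0,1)` with `u'(0) = u(1) = 0`, and any C³ function `ψ` with `ψ(0) = 0`,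
satisfy
`∫₀¹ [((p+3)/(p+1)) ψ' r² - (2(p-1)/(p+1)) ψ r] |u|^{p+1} dr
  + (1/2) ∫₀¹ (ψ''' + 4λψ') u² r² dr = ψ(1) u'(1)²`. -/
theorem pohozhaev_example1_identity
    (p : ℝ) (hp : 1 < p) (lam : ℝ)
    (u u' u'' : ℝ → ℝ)
    (hu : ∀ r ∈ Icc (0:ℝ) 1, HasDerivAt u (u' r) r)
    (hu' : ∀ r ∈ Icc (0:ℝ) 1, HasDerivAt u' (u'' r) r)
    (hu''c : ContinuousOn u'' (Icc (0:ℝ) 1))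
    (ψ ψ' ψ'' ψ''' : ℝ → ℝ)
    (hψ : ∀ r ∈ Icc (0:ℝ) 1, HasDerivAt ψ (ψ' r) r)
    (hψ' : ∀ r ∈ Icc (0:ℝ) 1, HasDerivAt ψ' (ψ'' r) r)
    (hψ'' : ∀ r ∈ Icc (0:ℝ) 1, HasDerivAt ψ'' (ψ''' r) r)
    (hψ'''c : ContinuousOn ψ''' (Icc (0:ℝ) 1))
    (hψ0 : ψ 0 = 0)
    (hode : ∀ r ∈ Ioo (0:ℝ) 1,
      u'' r + 2 / r * u' r + lam * u r + u r * |u r| ^ (p - 1) = 0)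
    (hbc0 : u' 0 = 0) (hbc1 : u 1 = 0) :
    (∫ r in (0:ℝ)..1,
        ((p + 3) / (p + 1) * ψ' r * r ^ 2
            - 2 * (p - 1) / (p + 1) * ψ r * r) * |u r| ^ (p + 1))
      + 1 / 2 * ∫ r in (0:ℝ)..1,
          (ψ''' r + 4 * lam * ψ' r) * (u r) ^ 2 * r ^ 2
      = ψ 1 * (u' 1) ^ 2 :=
  pohozhaev_example1_identity_general p hp lam u u' u'' hu hu' ψ ψ' ψ'' ψ''' hψ hψ' hψ'' hψ'''c hψ0
    hode hbc1
end

section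
/- Let p ≥ 5 be a real number and λ ∈ (0, π²/4]. If u ∈ C²([0,1]) satisfies u''(r) + (2/r) u'(r) + λ u(r) + u(r)|u(r)|^{p-1} = 0 for 0 < r < 1, with u'(0) = u(1) = 0, then u ≡ 0 on [0,1]. -/
/-!
With `μ = √λ`, the function `v = r u` solves `v'' + μ² v = -r u |u|^{p-1}`. For any
`v'' + μ² v = -g`, weighting the oscillator energy by `sin (2μr)` leaves a derivative
involving `g` only; adding the matching potential term for `g = r u |u|^{p-1}` yields a
Pohozaev-type functional `D` with `D' = r |u|^{p+1} K(r) / (2(p+1))`, where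
`K(r) = (p+3) r cos (2μr) - (p-1) sin (2μr) / μ`. As `2μ ≤ π`, the inequality
`θ cos θ < sin θ` on `(0, π]` together with `p + 3 ≤ 2(p - 1)` gives `K < 0` on `(0, 1)`,
so `D` is nonincreasing. But `D(0) = 0` and `D(1) = sin (2μ) u'(1)² / (4μ) ≥ 0`, so `D` is
constant, hence `D' = 0` and `u` vanishes on `(0, 1)`.
-/

open Set Real

theorem mul_cos_lt_sin {θ : ℝ} (h0 : 0 < θ) (hπ : θ ≤ π) : θ * cos θ < sin θ := by
  rcases lt_or_ge θ (π / 2) with hθ | hθ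
  · have hcos : 0 < cos θ := cos_pos_of_mem_Ioo ⟨by linarith, hθ⟩
    simpa [tan_eq_sin_div_cos, lt_div_iff₀ hcos] using lt_tan h0 hθ
  rcases hπ.lt_or_eq with hπ | rfl
  · have hsin : 0 < sin θ := sin_pos_of_pos_of_lt_pi h0 hπ
    nlinarith [cos_nonpos_of_pi_div_two_le_of_le hθ (by linarith)]
  · simp [pi_pos]

noncomputable def pohozaevWeight (p μ r : ℝ) : ℝ :=
  (p + 3) * r * cos (2 * μ * r) - (p - 1) * sin (2 * μ * r) / μ

theorem pohozaevWeight_neg {p μ r : ℝ} (hp : 5 ≤ p) (hμ : 0 < μ) (hr : 0 < r)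
    (hπ : 2 * μ * r ≤ π) : pohozaevWeight p μ r < 0 := by
  have hθ : 0 < 2 * μ * r := by positivity
  have hsin := sin_nonneg_of_nonneg_of_le_pi hθ.le hπ
  have key := mul_lt_mul_of_pos_left (mul_cos_lt_sin hθ hπ) (by linarith : 0 < p + 3)
  rw [pohozaevWeight, sub_neg, lt_div_iff₀ hμ]
  nlinarith

noncomputable def oscillatorPohozaev (μ r v w : ℝ) : ℝ :=
  (sin (2 * μ * r) * (w ^ 2 - μ ^ 2 * v ^ 2) / μ - 2 * cos (2 * μ * r) * v * w) / 4

theorem hasDerivAt_oscillatorPohozaev {μ r g : ℝ} {v w : ℝ → ℝ} (hμ : μ ≠ 0)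
    (hv : HasDerivAt v (w r) r) (hw : HasDerivAt w (-(μ ^ 2 * v r) - g) r) :
    HasDerivAt (fun s => oscillatorPohozaev μ s (v s) (w s))
      (g * (μ * cos (2 * μ * r) * v r - sin (2 * μ * r) * w r) / (2 * μ)) r := by
  have hθ : HasDerivAt (fun s => 2 * μ * s) (2 * μ) r := by
    simpa using (hasDerivAt_id r).const_mul (2 * μ)
  refine HasDerivAt.congr_deriv ((((hθ.sin.fun_mul
    ((hw.fun_pow 2).fun_sub ((hv.fun_pow 2).const_mul (μ ^ 2)))).div_const μ).fun_sub
    (((hθ.cos.const_mul 2).fun_mul hv).fun_mul hw)).div_const 4) ?_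
  field_simp
  ring

noncomputable def pohozaevEnergy (p μ : ℝ) (u u' : ℝ → ℝ) (r : ℝ) : ℝ :=
  oscillatorPohozaev μ r (r * u r) (u r + r * u' r) +
    sin (2 * μ * r) * r ^ 2 * |u r| ^ (p + 1) / (2 * μ * (p + 1))

theorem hasDerivAt_pohozaevEnergy {p μ r : ℝ} {u u' u'' : ℝ → ℝ} (hp : 0 < p) (hμ : μ ≠ 0)
    (hr : r ≠ 0) (hu : HasDerivAt u (u' r) r) (hu' : HasDerivAt u' (u'' r) r)
    (hode : u'' r + 2 / r * u' r + μ ^ 2 * u r + u r * |u r| ^ (p - 1) = 0) :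
    HasDerivAt (pohozaevEnergy p μ u u')
      (r * |u r| ^ (p + 1) / (2 * (p + 1)) * pohozaevWeight p μ r) r := by
  have hv : HasDerivAt (fun s => s * u s) (u r + r * u' r) r := by
    simpa using (hasDerivAt_id' r).fun_mul hu
  have hw : HasDerivAt (fun s => u s + s * u' s)
      (-(μ ^ 2 * (r * u r)) - r * (u r * |u r| ^ (p - 1))) r := by
    refine (hu.fun_add ((hasDerivAt_id' r).fun_mul hu')).congr_deriv ?_
    have h2 : r * (2 / r) = 2 := mul_div_cancel₀ 2 hr
    linear_combination r * hode - u' r * h2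
  have hθ : HasDerivAt (fun s => 2 * μ * s) (2 * μ) r := by
    simpa using (hasDerivAt_id r).const_mul (2 * μ)
  have habs : HasDerivAt (fun s => |u s| ^ (p + 1))
      ((p + 1) * |u r| ^ (p - 1) * u r * u' r) r := by
    refine ((hasDerivAt_abs_rpow (u r) (by linarith : 1 < p + 1)).comp r hu).congr_deriv ?_
    rw [show p + 1 - 2 = p - 1 by ring]
  have hpow : |u r| ^ (p + 1) = |u r| ^ (p - 1) * u r ^ 2 := by
    rw [show p + 1 = (p - 1) + 2 by ring, rpow_add' (abs_nonneg _) (by linarith)]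
    norm_cast
    simp
  refine HasDerivAt.congr_deriv
    ((hasDerivAt_oscillatorPohozaev (v := fun s => s * u s) hμ hv hw).fun_add
      (((hθ.sin.fun_mul (hasDerivAt_pow 2 r)).fun_mul habs).div_const (2 * μ * (p + 1)))) ?_
  simp only [pohozaevWeight, hpow]
  field_simp
  ring

theorem continuousAt_pohozaevEnergy {p μ r : ℝ} {u u' : ℝ → ℝ} (hp : 0 ≤ p + 1)
    (hu : ContinuousAt u r) (hu' : ContinuousAt u' r) :
    ContinuousAt (pohozaevEnergy p μ u u') r := by
  unfold pohozaevEnergy oscillatorPohozaev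
  have := (continuous_abs.rpow_const fun _ => Or.inr hp).continuousAt.comp hu
  fun_prop

theorem pohozaevEnergy_zero (p μ : ℝ) (u u' : ℝ → ℝ) : pohozaevEnergy p μ u u' 0 = 0 := by
  simp [pohozaevEnergy, oscillatorPohozaev]

theorem pohozaevEnergy_nonneg_of_eq_zero {p μ r : ℝ} {u u' : ℝ → ℝ} (hp : p + 1 ≠ 0)
    (hμ : 0 < μ) (hr : 0 ≤ r) (hπ : 2 * μ * r ≤ π) (hu : u r = 0) :
    0 ≤ pohozaevEnergy p μ u u' r := by
  have := sin_nonneg_of_nonneg_of_le_pi (by positivity) hπ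
  rw [pohozaevEnergy, oscillatorPohozaev, hu, abs_zero, zero_rpow hp]
  simp only [mul_zero, zero_mul, zero_add, zero_div, add_zero, ne_eq, OfNat.ofNat_ne_zero,
    not_false_eq_true, zero_pow, sub_zero]
  positivity

theorem eqOn_zero_of_hasDerivAt_nonpos_of_le {f f' : ℝ → ℝ} {a b : ℝ}
    (hf : ContinuousOn f (Icc a b)) (hf' : ∀ x ∈ Ioo a b, HasDerivAt f (f' x) x)
    (hf'_nonpos : ∀ x ∈ Ioo a b, f' x ≤ 0) (hab : f a ≤ f b) : EqOn f' 0 (Ioo a b) := by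
  intro x hx
  have hanti : AntitoneOn f (Icc a b) :=
    antitoneOn_of_hasDerivWithinAt_nonpos (convex_Icc a b) hf
      (by simpa using fun y hy => (hf' y hy).hasDerivWithinAt) (by simpa using hf'_nonpos)
  have hle : a ≤ b := (hx.1.trans hx.2).le
  have hconst : ∀ y ∈ Icc a b, f y = f a := fun y hy =>
    le_antisymm (hanti (left_mem_Icc.2 hle) hy hy.1)
      (hab.trans (hanti hy (right_mem_Icc.2 hle) hy.2))
  have hlocal : f =ᶠ[nhds x] fun _ => f a :=
    Filter.eventually_of_mem (Icc_mem_nhds hx.1 hx.2) hconst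
  exact (hf' x hx).unique ((hasDerivAt_const x (f a)).congr_of_eventuallyEq hlocal)

theorem brezis_nirenberg_nonexistence_general
    (p : ℝ) (hp : 5 ≤ p) (lam : ℝ) (hlam : lam ∈ Ioc (0:ℝ) (π ^ 2 / 4))
    (u u' u'' : ℝ → ℝ)
    (hu : ∀ r ∈ Icc (0:ℝ) 1, HasDerivAt u (u' r) r)
    (hu' : ∀ r ∈ Icc (0:ℝ) 1, HasDerivAt u' (u'' r) r)
    (hode : ∀ r ∈ Ioo (0:ℝ) 1,
      u'' r + 2 / r * u' r + lam * u r + u r * |u r| ^ (p - 1) = 0)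
    (hbc1 : u 1 = 0) :
    ∀ r ∈ Icc (0:ℝ) 1, u r = 0 := by
  obtain ⟨hlam0, hlamπ⟩ := hlam
  set μ := √lam
  have hμ : 0 < μ := sqrt_pos.2 hlam0
  have hμ2 : μ ^ 2 = lam := sq_sqrt hlam0.le
  have h2μ : 2 * μ ≤ π := by nlinarith [pi_pos]
  have hD' (r : ℝ) (hr : r ∈ Ioo (0:ℝ) 1) : HasDerivAt (pohozaevEnergy p μ u u')
      (r * |u r| ^ (p + 1) / (2 * (p + 1)) * pohozaevWeight p μ r) r :=
    hasDerivAt_pohozaevEnergy (by linarith) hμ.ne' hr.1.ne' (hu r (Ioo_subset_Icc_self hr))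
      (hu' r (Ioo_subset_Icc_self hr)) (hμ2 ▸ hode r hr)
  have hK (r : ℝ) (hr : r ∈ Ioo (0:ℝ) 1) : pohozaevWeight p μ r < 0 :=
    pohozaevWeight_neg hp hμ hr.1 (by nlinarith [hr.2])
  have hD'_zero := eqOn_zero_of_hasDerivAt_nonpos_of_le
    (fun r hr => (continuousAt_pohozaevEnergy (by linarith) (hu r hr).continuousAt
      (hu' r hr).continuousAt).continuousWithinAt) hD'
    (fun r hr => mul_nonpos_of_nonneg_of_nonpos (by have := hr.1; positivity) (hK r hr).le)
    (by rw [pohozaevEnergy_zero]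
        exact pohozaevEnergy_nonneg_of_eq_zero (by linarith) hμ zero_le_one (by linarith) hbc1)
  have hu_Ioo : EqOn u 0 (Ioo 0 1) := fun r hr => by
    simpa [(hK r hr).ne, hr.1.ne', (by linarith : p + 1 ≠ 0)] using hD'_zero hr
  exact hu_Ioo.of_subset_closure (fun r hr => (hu r hr).continuousAt.continuousWithinAt)
    continuousOn_const Ioo_subset_Icc_self (by rw [closure_Ioo zero_ne_one])

/-- Non-existence (Example 1): for `p ≥ 5` and `λ ∈ (0, π²/4]`, the problem
`u'' + (2/r)u' + λu + u|u|^{p-1} = 0` on `(0,1)`, `u'(0) = u(1) = 0`,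
has no non-trivial C² solution. -/
theorem brezis_nirenberg_nonexistence
    (p : ℝ) (hp : 5 ≤ p) (lam : ℝ) (hlam : lam ∈ Ioc (0:ℝ) (π ^ 2 / 4))
    (u u' u'' : ℝ → ℝ)
    (hu : ∀ r ∈ Icc (0:ℝ) 1, HasDerivAt u (u' r) r)
    (hu' : ∀ r ∈ Icc (0:ℝ) 1, HasDerivAt u' (u'' r) r)
    (hu''c : ContinuousOn u'' (Icc (0:ℝ) 1))
    (hode : ∀ r ∈ Ioo (0:ℝ) 1,
      u'' r + 2 / r * u' r + lam * u r + u r * |u r| ^ (p - 1) = 0)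
    (hbc0 : u' 0 = 0) (hbc1 : u 1 = 0) :
    ∀ r ∈ Icc (0:ℝ) 1, u r = 0 :=
  brezis_nirenberg_nonexistence_general p hp lam hlam u u' u'' hu hu' hode hbc1
end

section
/- Let n ≥ 3 be an integer, let f : ℝ → ℝ be continuously differentiable, and let F(u) = ∫₀ᵘ f(t) dt. Let u ∈ C²([0,1]) satisfy u''(r) + ((n-1)/r) u'(r) + f(u(r)) = 0 for 0 < r < 1, with u'(0) = u(1) = 0. Then (4n−4) ∫₀¹ F(u(r)) r^{2n-3} dr = (u'(1))². -/
/-!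
Multiplying the equation by `2 r^{2n-2} u'` shows that the weighted energy
`r^{2n-2} (u'² + 2 F(u))` has derivative `(4n-4) r^{2n-3} F(u)`: the weight `r^{2n-2}` is chosen
so that the damping term `((n-1)/r) u'` exactly cancels the `u'²` contribution of the weight's
derivative. Integrating over `[0,1]`, the energy vanishes at `0` because of the weight and equals
`u'(1)²` at `1` because `u(1) = 0` and `F(0) = 0`.
-/

open Set

noncomputable def weightedEnergy (F u u' : ℝ → ℝ) (k : ℕ) (r : ℝ) : ℝ :=
  r ^ k * (u' r ^ 2 + 2 * F (u r))

theorem hasDerivAt_weightedEnergy {F f u u' : ℝ → ℝ} {m r u''r : ℝ} (k : ℕ) (hr : r ≠ 0)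
    (hF : HasDerivAt F (f (u r)) (u r)) (hu : HasDerivAt u (u' r) r)
    (hu' : HasDerivAt u' u''r r) (hode : u''r + m / r * u' r + f (u r) = 0) :
    HasDerivAt (weightedEnergy F u u' (k + 1))
      (r ^ k * (((k : ℝ) + 1 - 2 * m) * u' r ^ 2 + 2 * ((k : ℝ) + 1) * F (u r))) r := by
  have hprod : HasDerivAt (fun s => s ^ (k + 1) * (u' s ^ 2 + 2 * F (u s)))
      (((k : ℝ) + 1) * r ^ k * (u' r ^ 2 + 2 * F (u r))
        + r ^ (k + 1) * (2 * u' r * u''r + 2 * (f (u r) * u' r))) r := by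
    simpa using (hasDerivAt_pow (k + 1) r).fun_mul
      ((hu'.fun_pow 2).fun_add ((hF.comp r hu).const_mul 2))
  refine hprod.congr_deriv ?_
  have hu''r : u''r = -(m / r * u' r + f (u r)) := by linarith
  rw [hu''r, pow_succ r k]
  field_simp
  ring

theorem weightedEnergy_zero {F u u' : ℝ → ℝ} {k : ℕ} (hk : k ≠ 0) :
    weightedEnergy F u u' k 0 = 0 := by
  simp [weightedEnergy, hk]

theorem integral_pohozhaev {F f u u' u'' : ℝ → ℝ} {m b : ℝ} (k : ℕ) (hkm : (k : ℝ) + 1 = 2 * m)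
    (hb : 0 ≤ b) (hF : ∀ x, HasDerivAt F (f x) x)
    (hu : ∀ r ∈ Icc 0 b, HasDerivAt u (u' r) r) (hu' : ∀ r ∈ Icc 0 b, HasDerivAt u' (u'' r) r)
    (hode : ∀ r ∈ Ioo 0 b, u'' r + m / r * u' r + f (u r) = 0) :
    2 * ((k : ℝ) + 1) * ∫ r in (0:ℝ)..b, F (u r) * r ^ k
      = weightedEnergy F u u' (k + 1) b := by
  have hFc : Continuous F := continuous_iff_continuousAt.2 fun x => (hF x).continuousAt
  have huc : ContinuousOn u (Icc 0 b) := HasDerivAt.continuousOn hu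
  have hu'c : ContinuousOn u' (Icc 0 b) := HasDerivAt.continuousOn hu'
  have hEc : ContinuousOn (weightedEnergy F u u' (k + 1)) (Icc 0 b) :=
    (continuousOn_pow _).mul ((hu'c.pow 2).add (continuousOn_const.mul (hFc.comp_continuousOn huc)))
  have hE' : ∀ r ∈ Ioo 0 b,
      HasDerivAt (weightedEnergy F u u' (k + 1)) (2 * ((k : ℝ) + 1) * (F (u r) * r ^ k)) r := by
    intro r hr
    have hI := Ioo_subset_Icc_self hr
    convert hasDerivAt_weightedEnergy k hr.1.ne' (hF (u r)) (hu r hI) (hu' r hI) (hode r hr)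
      using 1
    rw [← hkm]
    ring
  have hint : IntervalIntegrable (fun r => 2 * ((k : ℝ) + 1) * (F (u r) * r ^ k))
      MeasureTheory.volume 0 b := by
    apply ContinuousOn.intervalIntegrable
    rw [uIcc_of_le hb]
    exact continuousOn_const.mul ((hFc.comp_continuousOn huc).mul (continuousOn_pow _))
  rw [← intervalIntegral.integral_const_mul,
    intervalIntegral.integral_eq_sub_of_hasDerivAt_of_le hb hEc hE' hint,
    weightedEnergy_zero k.succ_ne_zero, sub_zero]

theorem pohozhaev_peletier_serrin_general
    (n : ℕ) (hn : 3 ≤ n)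
    (f : ℝ → ℝ) (hf : ContDiff ℝ 1 f)
    (F : ℝ → ℝ) (hF : ∀ x : ℝ, F x = ∫ t in (0:ℝ)..x, f t)
    (u u' u'' : ℝ → ℝ)
    (hu : ∀ r ∈ Icc (0:ℝ) 1, HasDerivAt u (u' r) r)
    (hu' : ∀ r ∈ Icc (0:ℝ) 1, HasDerivAt u' (u'' r) r)
    (hode : ∀ r ∈ Ioo (0:ℝ) 1, u'' r + ((n : ℝ) - 1) / r * u' r + f (u r) = 0)
    (hbc1 : u 1 = 0) :
    (4 * (n : ℝ) - 4) * ∫ r in (0:ℝ)..1, F (u r) * r ^ (2 * n - 3)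
      = (u' 1) ^ 2 := by
  have hF' : ∀ x, HasDerivAt F (f x) x := fun x => by
    rw [funext hF]
    exact (hf.continuous.integral_hasStrictDerivAt 0 x).hasDerivAt
  have hk : ((2 * n - 3 : ℕ) : ℝ) + 1 = 2 * ((n : ℝ) - 1) := by
    rw [Nat.cast_sub (by omega)]
    push_cast
    ring
  have key := integral_pohozhaev (2 * n - 3) hk zero_le_one hF' hu hu' hode
  rw [hk] at key
  simp only [weightedEnergy, hbc1, hF 0, intervalIntegral.integral_same, one_pow] at key
  linarith

/-- The Pohozhaev-type identity for `ψ(r) = r^{n-1}` (used by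
Peletier and Serrin): `(4n-4) ∫₀¹ F(u(r)) r^{2n-3} dr = u'(1)²`. -/
theorem pohozhaev_peletier_serrin
    (n : ℕ) (hn : 3 ≤ n)
    (f : ℝ → ℝ) (hf : ContDiff ℝ 1 f)
    (F : ℝ → ℝ) (hF : ∀ x : ℝ, F x = ∫ t in (0:ℝ)..x, f t)
    (u u' u'' : ℝ → ℝ)
    (hu : ∀ r ∈ Icc (0:ℝ) 1, HasDerivAt u (u' r) r)
    (hu' : ∀ r ∈ Icc (0:ℝ) 1, HasDerivAt u' (u'' r) r)
    (hu''c : ContinuousOn u'' (Icc (0:ℝ) 1))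
    (hode : ∀ r ∈ Ioo (0:ℝ) 1, u'' r + ((n : ℝ) - 1) / r * u' r + f (u r) = 0)
    (hbc0 : u' 0 = 0) (hbc1 : u 1 = 0) :
    (4 * (n : ℝ) - 4) * ∫ r in (0:ℝ)..1, F (u r) * r ^ (2 * n - 3)
      = (u' 1) ^ 2 :=
  pohozhaev_peletier_serrin_general n hn f hf F hF u u' u'' hu hu' hode hbc1
end

section
/- Let n ≥ 2 be an integer, let f : ℝ → ℝ be continuously differentiable, and let u ∈ C²([0,1]) satisfy u''(r) + ((n-1)/r) u'(r) + f(u(r)) = 0 for 0 < r < 1. Then for any ψ ∈ C²([0,1]), the function v(r) = ψ(r) u'(r) satisfies, for 0 < r < 1, v''(r) + ((n-1)/r) v'(r) + f'(u(r)) v(r) = −2 ψ'(r) f(u(r)) + u'(r) L[ψ](r) / r², where L[ψ](r) = r² ψ''(r) − (n−1) r ψ'(r) + (n−1) ψ(r). -/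
open Set Real Filter Topology

/-!
Differentiating the equation `u'' = -(c/r) u' - f(u)` shows that `u''` is itself differentiable,
with `u''' = (c/r²) u' - (c/r) u'' - f'(u) u'`. Substituting this and the equation itself into
`(ψ u')'' + (c/r)(ψ u')' + f'(u) ψ u'` leaves a rational identity in `r`, with `c = n - 1`.
-/

theorem hasDerivAt_of_radial_ode {c r f' : ℝ} {f u u' u'' : ℝ → ℝ} (hr : r ≠ 0)
    (hu : HasDerivAt u (u' r) r) (hu' : HasDerivAt u' (u'' r) r) (hf : HasDerivAt f f' (u r))
    (hode : ∀ᶠ s in 𝓝 r, u'' s + c / s * u' s + f (u s) = 0) :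
    HasDerivAt u'' (c / r ^ 2 * u' r - c / r * u'' r - f' * u' r) r := by
  have hcoeff : HasDerivAt (fun s : ℝ => c / s) (-(c / r ^ 2)) r := by
    simpa [div_eq_mul_inv, neg_div] using (hasDerivAt_inv hr).const_mul c
  have hrhs : HasDerivAt (fun s => -(c / s * u' s) - f (u s))
      (-(-(c / r ^ 2) * u' r + c / r * u'' r) - f' * u' r) r :=
    ((hcoeff.mul hu').neg).sub (hf.comp r hu)
  refine (hrhs.congr_of_eventuallyEq ?_).congr_deriv (by ring)
  filter_upwards [hode] with s hs
  linarith

theorem radial_linearization {c r : ℝ} {f u u' u'' ψ ψ' ψ'' : ℝ → ℝ} (hr : r ≠ 0)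
    (hf : DifferentiableAt ℝ f (u r))
    (hu : HasDerivAt u (u' r) r) (hu' : HasDerivAt u' (u'' r) r)
    (hψ : HasDerivAt ψ (ψ' r) r) (hψ' : HasDerivAt ψ' (ψ'' r) r)
    (hode : ∀ᶠ s in 𝓝 r, u'' s + c / s * u' s + f (u s) = 0) :
    deriv (fun s => ψ' s * u' s + ψ s * u'' s) r
        + c / r * (ψ' r * u' r + ψ r * u'' r) + deriv f (u r) * (ψ r * u' r)
      = -2 * ψ' r * f (u r) + u' r * (r ^ 2 * ψ'' r - c * r * ψ' r + c * ψ r) / r ^ 2 := by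
  have hu'' := hasDerivAt_of_radial_ode hr hu hu' hf.hasDerivAt hode
  have hv : HasDerivAt (fun s => ψ' s * u' s + ψ s * u'' s)
      (ψ'' r * u' r + ψ' r * u'' r + (ψ' r * u'' r + ψ r *
        (c / r ^ 2 * u' r - c / r * u'' r - deriv f (u r) * u' r))) r :=
    (hψ'.mul hu').add (hψ.mul hu'')
  rw [hv.deriv,
    show u'' r = -(c / r * u' r) - f (u r) by linarith [hode.self_of_nhds]]
  field_simp
  ring

theorem laplace_linearization_general
    (n : ℕ)
    (f : ℝ → ℝ) (hf : ContDiff ℝ 1 f)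
    (u u' u'' : ℝ → ℝ)
    (hu : ∀ r ∈ Icc (0:ℝ) 1, HasDerivAt u (u' r) r)
    (hu' : ∀ r ∈ Icc (0:ℝ) 1, HasDerivAt u' (u'' r) r)
    (ψ ψ' ψ'' : ℝ → ℝ)
    (hψ : ∀ r ∈ Icc (0:ℝ) 1, HasDerivAt ψ (ψ' r) r)
    (hψ' : ∀ r ∈ Icc (0:ℝ) 1, HasDerivAt ψ' (ψ'' r) r)
    (hode : ∀ r ∈ Ioo (0:ℝ) 1,
      u'' r + ((n : ℝ) - 1) / r * u' r + f (u r) = 0) :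
    ∀ r ∈ Ioo (0:ℝ) 1,
      deriv (fun s => ψ' s * u' s + ψ s * u'' s) r
          + ((n : ℝ) - 1) / r * (ψ' r * u' r + ψ r * u'' r)
          + deriv f (u r) * (ψ r * u' r)
        = -2 * ψ' r * f (u r)
          + u' r * (r ^ 2 * ψ'' r - ((n : ℝ) - 1) * r * ψ' r
              + ((n : ℝ) - 1) * ψ r) / r ^ 2 := by
  intro r hr
  have hrIcc : r ∈ Icc (0:ℝ) 1 := Ioo_subset_Icc_self hr
  exact radial_linearization hr.1.ne' (hf.differentiable one_ne_zero _) (hu r hrIcc)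
    (hu' r hrIcc) (hψ r hrIcc) (hψ' r hrIcc)
    (eventually_of_mem (isOpen_Ioo.mem_nhds hr) hode)

/-- The linearization lemma for the Laplacian (the `p = 2` case):
if `u'' + ((n-1)/r)u' + f(u) = 0` on `(0,1)`, then `v = ψ u'`
(with `v' = ψ' u' + ψ u''`) satisfies
`v'' + ((n-1)/r)v' + f'(u)v = -2 ψ' f(u) + u' L[ψ]/r²` on `(0,1)`,
where `L[ψ] = r²ψ'' - (n-1) r ψ' + (n-1) ψ`. -/
theorem laplace_linearization
    (n : ℕ) (hn : 2 ≤ n)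
    (f : ℝ → ℝ) (hf : ContDiff ℝ 1 f)
    (u u' u'' : ℝ → ℝ)
    (hu : ∀ r ∈ Icc (0:ℝ) 1, HasDerivAt u (u' r) r)
    (hu' : ∀ r ∈ Icc (0:ℝ) 1, HasDerivAt u' (u'' r) r)
    (hu''c : ContinuousOn u'' (Icc (0:ℝ) 1))
    (ψ ψ' ψ'' : ℝ → ℝ)
    (hψ : ∀ r ∈ Icc (0:ℝ) 1, HasDerivAt ψ (ψ' r) r)
    (hψ' : ∀ r ∈ Icc (0:ℝ) 1, HasDerivAt ψ' (ψ'' r) r)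
    (hψ''c : ContinuousOn ψ'' (Icc (0:ℝ) 1))
    (hode : ∀ r ∈ Ioo (0:ℝ) 1,
      u'' r + ((n : ℝ) - 1) / r * u' r + f (u r) = 0) :
    ∀ r ∈ Ioo (0:ℝ) 1,
      deriv (fun s => ψ' s * u' s + ψ s * u'' s) r
          + ((n : ℝ) - 1) / r * (ψ' r * u' r + ψ r * u'' r)
          + deriv f (u r) * (ψ r * u' r)
        = -2 * ψ' r * f (u r)
          + u' r * (r ^ 2 * ψ'' r - ((n : ℝ) - 1) * r * ψ' r
              + ((n : ℝ) - 1) * ψ r) / r ^ 2 :=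
  laplace_linearization_general n f hf u u' u'' hu hu' ψ ψ' ψ'' hψ hψ' hode
end

section
/- Let p ≥ 5 be a real number, λ ∈ (0, π²/4], and let u ∈ C²([0,1]) satisfy u''(r) + (2/r) u'(r) + λ u(r) + u(r)|u(r)|^{p-1} = 0 for 0 < r < 1, with u'(0) = u(1) = 0. Then, with ψ(r) = sin(2√λ r), one has ∫₀¹ [ ((p+3)/(p+1)) ψ'(r) r² − (2(p−1)/(p+1)) ψ(r) r ] |u(r)|^{p+1} dr = ψ(1) (u'(1))², and the coefficient ((p+3)/(p+1)) ψ'(r) r² − (2(p−1)/(p+1)) ψ(r) r is strictly negative for every r ∈ (0,1]. -/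
/-!
Multiplying the equation by `2 r² ψ u' + (2 r ψ - r² ψ') u` turns it into
`B' = ((p+3)/(p+1) ψ' r² - 2(p-1)/(p+1) ψ r) |u|^{p+1}` for an explicit flux `B`
(`pohozhaevFlux`), provided `ψ''' + 4 λ ψ' = 0`. Every term of `B` carries a factor `r` or `ψ`,
so `B 0 = 0` when `ψ 0 = 0`, and `u 1 = 0` leaves `B 1 = ψ 1 u'(1)²`.

For the sign, with `x = 2 √λ r ∈ (0, π]` the weight is
`r/(p+1) · ((p+3) x cos x - 2(p-1) sin x)`, and `x cos x < sin x` bounds the bracket by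
`(5 - p) sin x ≤ 0`.
-/

open Set Real

theorem mul_cos_lt_sin_s14 {x : ℝ} (hx0 : 0 < x) (hxπ : x ≤ π) : x * cos x < sin x := by
  have hderiv (y : ℝ) : HasDerivAt (fun t => sin t - t * cos t) (y * sin y) y := by
    simpa using (hasDerivAt_sin y).fun_sub ((hasDerivAt_id y).fun_mul (hasDerivAt_cos y))
  have hmono : StrictMonoOn (fun t => sin t - t * cos t) (Icc 0 π) := by
    refine strictMonoOn_of_deriv_pos (convex_Icc 0 π) (by fun_prop) fun y hy => ?_
    rw [interior_Icc] at hy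
    rw [(hderiv y).deriv]
    exact mul_pos hy.1 (sin_pos_of_pos_of_lt_pi hy.1 hy.2)
  simpa using hmono ⟨le_rfl, pi_pos.le⟩ ⟨hx0.le, hxπ⟩ hx0

theorem sine_pohozhaev_weight_neg {p s r : ℝ} (hp : 5 ≤ p) (hr : 0 < r) (hsr0 : 0 < s * r)
    (hsrπ : s * r ≤ π) :
    (p + 3) / (p + 1) * (s * cos (s * r)) * r ^ 2 - 2 * (p - 1) / (p + 1) * sin (s * r) * r
      < 0 := by
  have hcos := mul_lt_mul_of_pos_left (mul_cos_lt_sin_s14 hsr0 hsrπ) (by linarith : (0:ℝ) < p + 3)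
  have hsin := mul_nonneg (by linarith : (0:ℝ) ≤ p - 5)
    (sin_nonneg_of_nonneg_of_le_pi hsr0.le hsrπ)
  have hfactor : (p + 3) / (p + 1) * (s * cos (s * r)) * r ^ 2
        - 2 * (p - 1) / (p + 1) * sin (s * r) * r
      = r / (p + 1) * ((p + 3) * (s * r * cos (s * r)) - 2 * (p - 1) * sin (s * r)) := by
    field_simp
  rw [hfactor]
  exact mul_neg_of_pos_of_neg (by positivity) (by linarith)

theorem sq_mul_abs_rpow_sub_one {p : ℝ} (hp : p + 1 ≠ 0) (t : ℝ) :
    t ^ 2 * |t| ^ (p - 1) = |t| ^ (p + 1) := by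
  rcases eq_or_ne t 0 with rfl | ht
  · simp [zero_rpow hp]
  · rw [show p + 1 = p - 1 + 2 by ring, rpow_add (abs_pos.mpr ht), ← sq_abs t, rpow_two]
    ring

section Pohozhaev

variable {p lam : ℝ} {u u' u'' ψ ψ' ψ'' : ℝ → ℝ}

/-- For `ψ = sin (2 √λ r)` the last coefficient is `r ψ' - ψ + 2 λ r² ψ`; writing
`-r² ψ'' / 2` for `2 λ r² ψ` makes `ψ''' + 4 λ ψ' = 0` the only property of `ψ` the
derivative needs. -/
noncomputable def pohozhaevFlux (p lam : ℝ) (u u' ψ ψ' ψ'' : ℝ → ℝ) (r : ℝ) : ℝ :=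
  ψ r * r ^ 2 * (u' r ^ 2 + lam * u r ^ 2 + 2 / (p + 1) * |u r| ^ (p + 1))
    + (2 * ψ r * r - ψ' r * r ^ 2) * (u r * u' r)
    - (ψ' r * r - ψ r - ψ'' r * r ^ 2 / 2) * u r ^ 2

theorem hasDerivAt_pohozhaevFlux {r : ℝ} (hp : 0 < p) (hr : r ≠ 0)
    (hu : HasDerivAt u (u' r) r) (hu' : HasDerivAt u' (u'' r) r)
    (hψ : HasDerivAt ψ (ψ' r) r) (hψ' : HasDerivAt ψ' (ψ'' r) r)
    (hψ'' : HasDerivAt ψ'' (-(4 * lam) * ψ' r) r)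
    (hode : u'' r + 2 / r * u' r + lam * u r + u r * |u r| ^ (p - 1) = 0) :
    HasDerivAt (pohozhaevFlux p lam u u' ψ ψ' ψ'')
      (((p + 3) / (p + 1) * ψ' r * r ^ 2 - 2 * (p - 1) / (p + 1) * ψ r * r)
        * |u r| ^ (p + 1)) r := by
  have hid := hasDerivAt_id' r
  have hr2 : HasDerivAt (fun t : ℝ => t ^ 2) (2 * r) r := by simpa using hasDerivAt_pow 2 r
  have hpow : HasDerivAt (fun t => |u t| ^ (p + 1))
      ((p + 1) * |u r| ^ (p - 1) * u r * u' r) r := by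
    have := (hasDerivAt_abs_rpow (u r) (by linarith : 1 < p + 1)).comp r hu
    rwa [show p + 1 - 2 = p - 1 by ring] at this
  have H :=
    ((hψ.fun_mul hr2).fun_mul (((hu'.fun_pow 2).fun_add ((hu.fun_pow 2).const_mul lam)).fun_add
        (hpow.const_mul (2 / (p + 1))))).fun_add
      ((((hψ.const_mul 2).fun_mul hid).fun_sub (hψ'.fun_mul hr2)).fun_mul (hu.fun_mul hu'))
    |>.fun_sub (((hψ'.fun_mul hid).fun_sub hψ |>.fun_sub
      ((hψ''.fun_mul hr2).div_const 2)).fun_mul (hu.fun_pow 2))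
  refine H.congr_deriv ?_
  rw [← sq_mul_abs_rpow_sub_one (by linarith : p + 1 ≠ 0),
    show u'' r = -(2 / r * u' r + lam * u r + u r * |u r| ^ (p - 1)) by linarith]
  field_simp
  ring

theorem integral_pohozhaev_weight (hp : 0 < p)
    (hu : ∀ r ∈ Icc (0:ℝ) 1, HasDerivAt u (u' r) r)
    (hu' : ∀ r ∈ Icc (0:ℝ) 1, HasDerivAt u' (u'' r) r)
    (hψ : ∀ r ∈ Icc (0:ℝ) 1, HasDerivAt ψ (ψ' r) r)
    (hψ' : ∀ r ∈ Icc (0:ℝ) 1, HasDerivAt ψ' (ψ'' r) r)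
    (hψ'' : ∀ r ∈ Icc (0:ℝ) 1, HasDerivAt ψ'' (-(4 * lam) * ψ' r) r)
    (hode : ∀ r ∈ Ioo (0:ℝ) 1,
      u'' r + 2 / r * u' r + lam * u r + u r * |u r| ^ (p - 1) = 0)
    (hψ0 : ψ 0 = 0) (hbc1 : u 1 = 0) :
    ∫ r in (0:ℝ)..1, ((p + 3) / (p + 1) * ψ' r * r ^ 2 - 2 * (p - 1) / (p + 1) * ψ r * r)
        * |u r| ^ (p + 1)
      = ψ 1 * u' 1 ^ 2 := by
  have hu_c := HasDerivAt.continuousOn hu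
  have hu'_c := HasDerivAt.continuousOn hu'
  have hψ_c := HasDerivAt.continuousOn hψ
  have hψ'_c := HasDerivAt.continuousOn hψ'
  have hψ''_c := HasDerivAt.continuousOn hψ''
  have hpow_c : ContinuousOn (fun r => |u r| ^ (p + 1)) (Icc 0 1) :=
    ((continuous_rpow_const (by linarith)).comp continuous_abs).comp_continuousOn hu_c
  have hflux_c : ContinuousOn (pohozhaevFlux p lam u u' ψ ψ' ψ'') (Icc 0 1) := by
    unfold pohozhaevFlux
    fun_prop
  have hint : IntervalIntegrable (fun r => ((p + 3) / (p + 1) * ψ' r * r ^ 2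
      - 2 * (p - 1) / (p + 1) * ψ r * r) * |u r| ^ (p + 1)) MeasureTheory.volume 0 1 := by
    apply ContinuousOn.intervalIntegrable
    rw [uIcc_of_le zero_le_one]
    fun_prop
  have hflux_deriv : ∀ r ∈ Ioo (0:ℝ) 1, HasDerivAt (pohozhaevFlux p lam u u' ψ ψ' ψ'')
      (((p + 3) / (p + 1) * ψ' r * r ^ 2 - 2 * (p - 1) / (p + 1) * ψ r * r)
        * |u r| ^ (p + 1)) r := fun r hr =>
    have hr' := Ioo_subset_Icc_self hr
    hasDerivAt_pohozhaevFlux hp hr.1.ne' (hu r hr') (hu' r hr') (hψ r hr') (hψ' r hr')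
      (hψ'' r hr') (hode r hr)
  rw [intervalIntegral.integral_eq_sub_of_hasDerivAt_of_le zero_le_one hflux_c hflux_deriv hint]
  simp [pohozhaevFlux, hψ0, hbc1, zero_rpow (by linarith : p + 1 ≠ 0)]

end Pohozhaev

theorem pohozhaev_sine_multiplier_general
    (p : ℝ) (hp : 5 ≤ p) (lam : ℝ) (hlam : lam ∈ Ioc (0:ℝ) (π ^ 2 / 4))
    (u u' u'' : ℝ → ℝ)
    (hu : ∀ r ∈ Icc (0:ℝ) 1, HasDerivAt u (u' r) r)
    (hu' : ∀ r ∈ Icc (0:ℝ) 1, HasDerivAt u' (u'' r) r)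
    (hode : ∀ r ∈ Ioo (0:ℝ) 1,
      u'' r + 2 / r * u' r + lam * u r + u r * |u r| ^ (p - 1) = 0)
    (hbc1 : u 1 = 0) :
    (∫ r in (0:ℝ)..1,
        ((p + 3) / (p + 1) * (2 * Real.sqrt lam * cos (2 * Real.sqrt lam * r)) * r ^ 2
          - 2 * (p - 1) / (p + 1) * sin (2 * Real.sqrt lam * r) * r)
          * |u r| ^ (p + 1))
      = sin (2 * Real.sqrt lam) * (u' 1) ^ 2
    ∧ ∀ r ∈ Ioc (0:ℝ) 1,
        (p + 3) / (p + 1) * (2 * Real.sqrt lam * cos (2 * Real.sqrt lam * r)) * r ^ 2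
          - 2 * (p - 1) / (p + 1) * sin (2 * Real.sqrt lam * r) * r < 0 := by
  obtain ⟨hlam0, hlamπ⟩ := hlam
  set s := 2 * √lam
  have hs0 : 0 < s := by positivity
  have hs2 : s ^ 2 = 4 * lam := by rw [mul_pow, sq_sqrt hlam0.le]; ring
  have hsπ : s ≤ π := by nlinarith [pi_pos]
  have hsin (r : ℝ) : HasDerivAt (fun t => sin (s * t)) (s * cos (s * r)) r :=
    (((hasDerivAt_id' r).const_mul s).sin).congr_deriv (by ring)
  have hcos (r : ℝ) : HasDerivAt (fun t => s * cos (s * t)) (-(s ^ 2 * sin (s * r))) r :=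
    ((((hasDerivAt_id' r).const_mul s).cos).const_mul s).congr_deriv (by ring)
  have hsin'' (r : ℝ) :
      HasDerivAt (fun t => -(s ^ 2 * sin (s * t))) (-(4 * lam) * (s * cos (s * r))) r :=
    ((hsin r).const_mul (s ^ 2)).fun_neg.congr_deriv (by rw [hs2]; ring)
  refine ⟨?_, fun r hr =>
    sine_pohozhaev_weight_neg hp hr.1 (mul_pos hs0 hr.1) (by nlinarith [hr.2])⟩
  simpa using integral_pohozhaev_weight (by linarith) hu hu' (fun r _ => hsin r)
    (fun r _ => hcos r) (fun r _ => hsin'' r) hode (by simp) hbc1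

/-- The key step of the non-existence proof in Example 1: with
`ψ(r) = sin(2√λ r)` (so `ψ'(r) = 2√λ cos(2√λ r)`), the Pohozhaev-type
identity reduces to
`∫₀¹ [((p+3)/(p+1)) ψ' r² - (2(p-1)/(p+1)) ψ r] |u|^{p+1} dr = ψ(1) u'(1)²`,
and the coefficient in the integrand is strictly negative on `(0,1]`. -/
theorem pohozhaev_sine_multiplier
    (p : ℝ) (hp : 5 ≤ p) (lam : ℝ) (hlam : lam ∈ Ioc (0:ℝ) (π ^ 2 / 4))
    (u u' u'' : ℝ → ℝ)
    (hu : ∀ r ∈ Icc (0:ℝ) 1, HasDerivAt u (u' r) r)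
    (hu' : ∀ r ∈ Icc (0:ℝ) 1, HasDerivAt u' (u'' r) r)
    (hu''c : ContinuousOn u'' (Icc (0:ℝ) 1))
    (hode : ∀ r ∈ Ioo (0:ℝ) 1,
      u'' r + 2 / r * u' r + lam * u r + u r * |u r| ^ (p - 1) = 0)
    (hbc0 : u' 0 = 0) (hbc1 : u 1 = 0) :
    (∫ r in (0:ℝ)..1,
        ((p + 3) / (p + 1) * (2 * Real.sqrt lam * cos (2 * Real.sqrt lam * r)) * r ^ 2
          - 2 * (p - 1) / (p + 1) * sin (2 * Real.sqrt lam * r) * r)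
          * |u r| ^ (p + 1))
      = sin (2 * Real.sqrt lam) * (u' 1) ^ 2
    ∧ ∀ r ∈ Ioc (0:ℝ) 1,
        (p + 3) / (p + 1) * (2 * Real.sqrt lam * cos (2 * Real.sqrt lam * r)) * r ^ 2
          - 2 * (p - 1) / (p + 1) * sin (2 * Real.sqrt lam * r) * r < 0 :=
  pohozhaev_sine_multiplier_general p hp lam hlam u u' u'' hu hu' hode hbc1
end
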